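/- arXiv:2509.16296 — 9 statements merged into one kernel-verified Lean document; each statement's English description precedes it below -/
import Mathlib

section
/- For every α > 0 and all x, y ∈ ℝ^n, the softmax map with temperature α is Lipschitz with constant α with respect to the Euclidean (ℓ2) norm: ‖softmax_α(x) − softmax_α(y)‖₂ ≤ α‖x − y‖₂. -/
/-- Softmax with temperature `α`: `softmax α x i = exp (α * x i) / ∑ j, exp (α * x j)`. -/
noncomputable def softmax {n : ℕ} (α : ℝ) (x : Fin n → ℝ) : Fin n → ℝ :=
  fun i => Real.exp (α * x i) / ∑ j, Real.exp (α * x j)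

open Real Finset ContinuousLinearMap

noncomputable def smJ {n : ℕ} (α : ℝ) (x : Fin n → ℝ) : (Fin n → ℝ) →L[ℝ] (Fin n → ℝ) :=
  ContinuousLinearMap.pi fun i =>
    (α * softmax α x i) • ((proj i : (Fin n → ℝ) →L[ℝ] ℝ)
      - ∑ j, softmax α x j • (proj j : (Fin n → ℝ) →L[ℝ] ℝ))

lemma softmax_hasFDerivAt {n : ℕ} (α : ℝ) (x : Fin n → ℝ) :
    HasFDerivAt (softmax α) (smJ α x) x := by
  apply hasFDerivAt_pi.2
  intro i
  have hS : (0:ℝ) < ∑ j, Real.exp (α * x j) :=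
    Finset.sum_pos (fun j _ => Real.exp_pos _) ⟨i, Finset.mem_univ i⟩
  have hS0 : (∑ j, Real.exp (α * x j)) ≠ 0 := ne_of_gt hS
  have hexp : ∀ k : Fin n, HasFDerivAt (fun z : Fin n → ℝ => Real.exp (α * z k))
      ((α * Real.exp (α * x k)) • (proj k : (Fin n → ℝ) →L[ℝ] ℝ)) x := by
    intro k
    have h1 : HasFDerivAt (fun z : Fin n → ℝ => α * z k)
        (α • (proj k : (Fin n → ℝ) →L[ℝ] ℝ)) x := by
      simpa using (hasFDerivAt_apply k x).const_mul α
    have := (Real.hasDerivAt_exp (α * x k)).comp_hasFDerivAt x h1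
    refine this.congr_fderiv ?_
    ext v
    simp [mul_comm, mul_assoc, mul_left_comm]
  have hSder : HasFDerivAt (fun z : Fin n → ℝ => ∑ j, Real.exp (α * z j))
      (∑ j, (α * Real.exp (α * x j)) • (proj j : (Fin n → ℝ) →L[ℝ] ℝ)) x :=
    HasFDerivAt.fun_sum (fun j _ => hexp j)
  have hinv : HasDerivAt (fun t : ℝ => t⁻¹)
      (-((∑ j, Real.exp (α * x j)) ^ 2)⁻¹) (∑ j, Real.exp (α * x j)) :=
    hasDerivAt_inv hS0
  have hSinv : HasFDerivAt (fun z : Fin n → ℝ => (∑ j, Real.exp (α * z j))⁻¹)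
      ((-((∑ j, Real.exp (α * x j)) ^ 2)⁻¹) •
        (∑ j, (α * Real.exp (α * x j)) • (proj j : (Fin n → ℝ) →L[ℝ] ℝ))) x :=
    hinv.comp_hasFDerivAt x hSder
  have hmul := (hexp i).fun_mul hSinv
  have heq : HasFDerivAt (fun z : Fin n → ℝ => softmax α z i)
      (Real.exp (α * x i) • ((-((∑ j, Real.exp (α * x j)) ^ 2)⁻¹) •
          (∑ j, (α * Real.exp (α * x j)) • (proj j : (Fin n → ℝ) →L[ℝ] ℝ)))
        + (∑ j, Real.exp (α * x j))⁻¹ •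
          ((α * Real.exp (α * x i)) • (proj i : (Fin n → ℝ) →L[ℝ] ℝ))) x := by
    simpa [softmax, div_eq_mul_inv] using hmul
  apply heq.congr_fderiv
  ext v
  simp only [ContinuousLinearMap.add_apply, ContinuousLinearMap.smul_apply,
    ContinuousLinearMap.sub_apply, ContinuousLinearMap.sum_apply, proj_apply, smul_eq_mul,
    softmax]
  have hT1 : ∑ j, (α * Real.exp (α * x j)) * v j = α * ∑ j, Real.exp (α * x j) * v j := by
    rw [Finset.mul_sum]; exact Finset.sum_congr rfl fun j _ => by ring
  have hT2 : ∑ j, (Real.exp (α * x j) / ∑ k, Real.exp (α * x k)) * v j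
      = (∑ j, Real.exp (α * x j) * v j) / ∑ k, Real.exp (α * x k) := by
    rw [Finset.sum_div]; exact Finset.sum_congr rfl fun j _ => by ring
  rw [hT1, hT2]
  field_simp
  ring



lemma key_bound {n : ℕ} (p v : Fin n → ℝ) (hp0 : ∀ i, 0 ≤ p i) (hp1 : ∑ i, p i = 1) :
    ∑ i, (p i * (v i - ∑ j, p j * v j)) ^ 2 ≤ ∑ i, v i ^ 2 := by
  set s := ∑ j, p j * v j with hs
  have hple : ∀ i, p i ≤ 1 := fun i => hp1 ▸ Finset.single_le_sum (fun j _ => hp0 j) (mem_univ i)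
  have h1 : ∑ i, (p i * (v i - s)) ^ 2 ≤ ∑ i, p i * (v i - s) ^ 2 := by
    apply Finset.sum_le_sum; intro i _
    have : (p i * (v i - s)) ^ 2 = p i ^ 2 * (v i - s) ^ 2 := by ring
    rw [this]
    have : p i ^ 2 ≤ p i := by nlinarith [hp0 i, hple i]
    exact mul_le_mul_of_nonneg_right this (sq_nonneg _)
  have h2 : ∑ i, p i * (v i - s) ^ 2 = (∑ i, p i * v i ^ 2) - s ^ 2 := by
    have : ∀ i ∈ Finset.univ, p i * (v i - s) ^ 2
        = p i * v i ^ 2 - 2 * s * (p i * v i) + s ^ 2 * p i := fun i _ => by ring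
    rw [Finset.sum_congr rfl this, Finset.sum_add_distrib, Finset.sum_sub_distrib,
      ← Finset.mul_sum, ← Finset.mul_sum, hp1, ← hs]
    ring
  have h3 : ∑ i, p i * v i ^ 2 ≤ ∑ i, v i ^ 2 := by
    apply Finset.sum_le_sum; intro i _
    nlinarith [hple i, hp0 i, sq_nonneg (v i)]
  calc ∑ i, (p i * (v i - s)) ^ 2 ≤ ∑ i, p i * (v i - s) ^ 2 := h1
    _ = (∑ i, p i * v i ^ 2) - s ^ 2 := h2
    _ ≤ ∑ i, p i * v i ^ 2 := by nlinarith [sq_nonneg s]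
    _ ≤ ∑ i, v i ^ 2 := h3

lemma softmax_nonneg {n : ℕ} (α : ℝ) (x : Fin n → ℝ) (i : Fin n) : 0 ≤ softmax α x i :=
  div_nonneg (Real.exp_pos _).le (Finset.sum_nonneg fun j _ => (Real.exp_pos _).le)

lemma softmax_sum {n : ℕ} (α : ℝ) (x : Fin n → ℝ) (hn : 0 < n) : ∑ i, softmax α x i = 1 := by
  have hS : (0:ℝ) < ∑ j, Real.exp (α * x j) :=
    Finset.sum_pos (fun j _ => Real.exp_pos _) (Finset.univ_nonempty_iff.2 ⟨⟨0, hn⟩⟩)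
  simp only [softmax]
  rw [← Finset.sum_div, div_self (ne_of_gt hS)]


/-- The softmax map with temperature `α > 0` is `α`-Lipschitz with respect to the
Euclidean (ℓ2) norm on `ℝ^n`. -/
theorem softmax_lipschitz_l2 {n : ℕ} (α : ℝ) (hα : 0 < α) (x y : Fin n → ℝ) :
    Real.sqrt (∑ i, (softmax α x i - softmax α y i) ^ 2)
      ≤ α * Real.sqrt (∑ i, (x i - y i) ^ 2) := by
  rcases Nat.eq_zero_or_pos n with hn | hn
  · subst hn
    simp [Real.sqrt_zero]
  classical
  let e : EuclideanSpace ℝ (Fin n) ≃L[ℝ] (Fin n → ℝ) := EuclideanSpace.equiv (Fin n) ℝ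
  let F : EuclideanSpace ℝ (Fin n) → EuclideanSpace ℝ (Fin n) := fun z => e.symm (softmax α (e z))
  let J' : EuclideanSpace ℝ (Fin n) → (EuclideanSpace ℝ (Fin n) →L[ℝ] EuclideanSpace ℝ (Fin n)) :=
    fun z => ((e.symm : (Fin n → ℝ) →L[ℝ] EuclideanSpace ℝ (Fin n)).comp (smJ α (e z))).comp
      (e : EuclideanSpace ℝ (Fin n) →L[ℝ] (Fin n → ℝ))
  have hF : ∀ z, HasFDerivAt F (J' z) z := fun z =>
    (e.symm.hasFDerivAt.comp _ ((softmax_hasFDerivAt α (e z)).comp z e.hasFDerivAt) : _)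
  have hcomp : ∀ (z v : EuclideanSpace ℝ (Fin n)) (i : Fin n),
      J' z v i = α * softmax α (e z) i * (v i - ∑ j, softmax α (e z) j * v j) := by
    intro z v i
    simp only [J', ContinuousLinearMap.comp_apply, ContinuousLinearEquiv.coe_coe]
    simp [smJ, e, mul_comm, mul_assoc]
  -- operator norm bound
  have hbound : ∀ z, ‖J' z‖ ≤ α := by
    intro z
    apply ContinuousLinearMap.opNorm_le_bound _ hα.le
    intro v
    rw [EuclideanSpace.norm_eq, EuclideanSpace.norm_eq]
    have h1 : ∀ i, ‖J' z v i‖ ^ 2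
        = α ^ 2 * (softmax α (e z) i * (v i - ∑ j, softmax α (e z) j * v j)) ^ 2 := by
      intro i
      rw [Real.norm_eq_abs, sq_abs, hcomp]
      ring
    simp_rw [h1]
    rw [← Finset.mul_sum]
    have hkey := key_bound (softmax α (e z)) (fun i => v i)
      (softmax_nonneg α (e z)) (softmax_sum α (e z) hn)
    have : Real.sqrt (α ^ 2 * ∑ i, (softmax α (e z) i * (v i - ∑ j, softmax α (e z) j * v j)) ^ 2)
        ≤ Real.sqrt (α ^ 2 * ∑ i, v i ^ 2) := by
      apply Real.sqrt_le_sqrt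
      exact mul_le_mul_of_nonneg_left hkey (sq_nonneg α)
    refine this.trans_eq ?_
    rw [Real.sqrt_mul (sq_nonneg α), Real.sqrt_sq hα.le]
    congr 2
    apply Finset.sum_congr rfl
    intro i _
    rw [Real.norm_eq_abs, sq_abs]
  -- mean value inequality on univ
  have hlip : ∀ a b : EuclideanSpace ℝ (Fin n), ‖F b - F a‖ ≤ α * ‖b - a‖ := by
    intro a b
    exact Convex.norm_image_sub_le_of_norm_hasFDerivWithin_le
      (fun z _ => (hF z).hasFDerivWithinAt) (fun z _ => hbound z) convex_univ
      (Set.mem_univ a) (Set.mem_univ b)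
  have := hlip (e.symm y) (e.symm x)
  have hL : ‖F (e.symm x) - F (e.symm y)‖
      = Real.sqrt (∑ i, (softmax α x i - softmax α y i) ^ 2) := by
    rw [EuclideanSpace.norm_eq]
    congr 1
    apply Finset.sum_congr rfl
    intro i _
    rw [Real.norm_eq_abs, sq_abs]
    simp [F, e]; rfl
  have hR : ‖e.symm x - e.symm y‖ = Real.sqrt (∑ i, (x i - y i) ^ 2) := by
    rw [EuclideanSpace.norm_eq]
    congr 1
    apply Finset.sum_congr rfl
    intro i _
    rw [Real.norm_eq_abs, sq_abs]
    congr 1 <;> simp [e]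
  rw [hL, hR] at this
  exact this
end

section
/- Let x ∈ ℝ^n with maximum value x* = max_i x_i, let M = {j : x_j = x*} be the set of maximizing indices, and suppose |M| < n. Let Z = ∑_{j=1}^n exp(α x_j). Then the ℓ1 distance between the softmax distribution and the uniform argmax distribution satisfies the exact identity ‖softmax_α(x) − argmax_U(x)‖₁ = 2 (∑_{j ∉ M} exp(α x_j)) / Z. -/
/-- For `x ∈ ℝ^n` with maximum value `x*`, maximizing index set `M` with `|M| < n`,
and `Z = ∑ j, exp (α x_j)`, the ℓ1 distance between `softmax_α(x)` and the uniform
argmax distribution equals `2 (∑_{j ∉ M} exp (α x_j)) / Z` exactly. -/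
theorem l1_softmax_argmaxU_eq {n : ℕ} (α : ℝ) (hα : 0 < α) (x : Fin n → ℝ)
    (xstar : ℝ) (hxstar : IsGreatest (Set.range x) xstar)
    (M : Finset (Fin n)) (hM : M = Finset.univ.filter (fun j => x j = xstar))
    (hcard : M.card < n) :
    ∑ i, |softmax α x i - (if i ∈ M then (1 : ℝ) / M.card else 0)|
      = 2 * (∑ j ∈ Finset.univ \ M, Real.exp (α * x j)) / (∑ j, Real.exp (α * x j)) := by
  have hn : 0 < n := lt_of_le_of_lt (Nat.zero_le _) hcard
  set Z := ∑ j, Real.exp (α * x j) with hZdef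
  have hZpos : 0 < Z :=
    Finset.sum_pos (fun j _ => Real.exp_pos _) ⟨⟨0, hn⟩, Finset.mem_univ _⟩
  set S := ∑ j ∈ Finset.univ \ M, Real.exp (α * x j) with hSdef
  have hMsum : ∑ j ∈ M, Real.exp (α * x j) = M.card * Real.exp (α * xstar) := by
    rw [Finset.sum_congr rfl (fun j hj => ?_), Finset.sum_const, nsmul_eq_mul]
    have hx : x j = xstar := by
      rw [hM] at hj; exact (Finset.mem_filter.mp hj).2
    rw [hx]
  have hZsplit : Z = M.card * Real.exp (α * xstar) + S := by
    rw [hZdef, ← Finset.sum_sdiff (Finset.subset_univ M), hMsum]; ring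
  have hMne : M.Nonempty := by
    obtain ⟨i, hi⟩ := hxstar.1
    exact ⟨i, by simp [hM, hi]⟩
  have hmpos : (0:ℝ) < M.card := by exact_mod_cast Finset.card_pos.mpr hMne
  have hcompl : (Finset.univ \ M).Nonempty := by
    apply Finset.sdiff_nonempty.mpr
    intro h
    have := Finset.card_le_card h
    rw [Finset.card_univ, Fintype.card_fin] at this
    omega
  have hSpos : 0 < S := Finset.sum_pos (fun j _ => Real.exp_pos _) hcompl
  have hle : Real.exp (α * xstar) / Z ≤ 1 / M.card := by
    rw [div_le_div_iff₀ hZpos hmpos]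
    nlinarith [hZsplit, hSpos]
  rw [← Finset.sum_sdiff (Finset.subset_univ M)]
  have h1 : ∑ j ∈ Finset.univ \ M, |softmax α x j - (if j ∈ M then (1:ℝ) / M.card else 0)|
      = S / Z := by
    rw [hSdef, Finset.sum_div]
    refine Finset.sum_congr rfl fun j hj => ?_
    have hjM : j ∉ M := (Finset.mem_sdiff.mp hj).2
    rw [if_neg hjM, sub_zero, abs_of_pos]
    · rfl
    · exact div_pos (Real.exp_pos _) hZpos
  have h2 : ∑ j ∈ M, |softmax α x j - (if j ∈ M then (1:ℝ) / M.card else 0)|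
      = S / Z := by
    have hterm : ∀ j ∈ M, |softmax α x j - (if j ∈ M then (1:ℝ) / M.card else 0)|
        = 1 / M.card - Real.exp (α * xstar) / Z := by
      intro j hj
      have hx : x j = xstar := by
        rw [hM] at hj; exact (Finset.mem_filter.mp hj).2
      rw [if_pos hj, abs_sub_comm, abs_of_nonneg]
      · show (1:ℝ)/M.card - Real.exp (α * x j) / Z = _
        rw [hx]
      · show (0:ℝ) ≤ 1/M.card - Real.exp (α * x j) / Z
        rw [hx]; linarith
    rw [Finset.sum_congr rfl hterm, Finset.sum_const, nsmul_eq_mul]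
    field_simp
    linear_combination hZsplit
  rw [h1, h2]; ring
end

section
/- Let x ∈ ℝ^n with maximum value x* = max_i x_i and maximizing index set M = {j : x_j = x*}, and suppose |M| < n. Let δ = min_{j ∉ M} (x* − x_j) > 0. Then for any α > 0, ‖softmax_α(x) − argmax_U(x)‖₁ ≤ 2 n e^{−α δ}. Moreover, if |M| = n (all entries of x are equal), then softmax_α(x) = argmax_U(x), so the distance is 0. -/
/-- Softmax–argmax approximation bound.  Let `x*` be the maximum value of `x`, and
`M` the set of maximizing indices.  If `|M| < n` and
`δ = min_{j ∉ M} (x* − x_j)`, then for any `α > 0`,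
`‖softmax_α(x) − argmax_U(x)‖₁ ≤ 2 n e^{−α δ}`.  Moreover, if `|M| = n` (all entries
equal) then `softmax_α(x) = argmax_U(x)`, so the distance is 0. -/
theorem l1_softmax_argmaxU_le {n : ℕ} (α : ℝ) (hα : 0 < α) (x : Fin n → ℝ)
    (xstar : ℝ) (hxstar : IsGreatest (Set.range x) xstar)
    (M : Finset (Fin n)) (hM : M = Finset.univ.filter (fun j => x j = xstar)) :
    (∀ δ : ℝ,
      M.card < n →
      (∃ j ∉ M, δ = xstar - x j) →
      (∀ j ∉ M, δ ≤ xstar - x j) →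
      ∑ i, |softmax α x i - (if i ∈ M then (1 : ℝ) / M.card else 0)|
        ≤ 2 * n * Real.exp (-α * δ)) ∧
    (M.card = n →
      softmax α x = fun i => if i ∈ M then (1 : ℝ) / M.card else 0) := by
  obtain ⟨⟨i0, hi0⟩, hub⟩ := hxstar
  have hub' : ∀ j, x j ≤ xstar := fun j => hub ⟨j, rfl⟩
  have hi0M : i0 ∈ M := by simp [hM, hi0]
  set S := ∑ j, Real.exp (α * x j) with hS
  have hSpos : 0 < S := Finset.sum_pos (fun j _ => Real.exp_pos _) ⟨i0, Finset.mem_univ _⟩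
  have hmpos : 0 < M.card := Finset.card_pos.mpr ⟨i0, hi0M⟩
  have hxM : ∀ i ∈ M, x i = xstar := fun i hi => by
    rw [hM] at hi; exact (Finset.mem_filter.mp hi).2
  constructor
  · rintro δ hcard ⟨j0, hj0M, hδ⟩ hδle
    set E := Real.exp (α * xstar) with hE
    set R := ∑ j ∈ Mᶜ, Real.exp (α * x j) with hR
    have hEpos : 0 < E := Real.exp_pos _
    have hSplit : (M.card : ℝ) * E + R = S := by
      rw [hS, ← Finset.sum_add_sum_compl M (fun j => Real.exp (α * x j))]
      congr 1
      rw [Finset.sum_congr rfl fun i hi => by rw [hxM i hi], Finset.sum_const, nsmul_eq_mul]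
    have hRnn : 0 ≤ R := Finset.sum_nonneg fun _ _ => (Real.exp_pos _).le
    have hm1 : (1 : ℝ) ≤ M.card := by exact_mod_cast hmpos
    have hmES : (M.card : ℝ) * E ≤ S := by linarith
    have hES : E ≤ S := by nlinarith
    have h1 : ∑ i ∈ M, |softmax α x i - (if i ∈ M then (1 : ℝ) / M.card else 0)| = R / S := by
      have hcong : ∀ i ∈ M, |softmax α x i - (if i ∈ M then (1 : ℝ) / M.card else 0)|
          = 1 / M.card - E / S := by
        intro i hi
        rw [if_pos hi]
        have hsm : softmax α x i = E / S := by simp only [softmax, hxM i hi, hE, hS]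
        rw [hsm, abs_of_nonpos, neg_sub]
        rw [sub_nonpos, div_le_div_iff₀ hSpos (by positivity)]
        nlinarith
      rw [Finset.sum_congr rfl hcong, Finset.sum_const, nsmul_eq_mul]
      have hm0 : (M.card : ℝ) ≠ 0 := by positivity
      have hRS : R = S - M.card * E := by linarith
      rw [hRS]
      field_simp
    have h2 : ∑ i ∈ Mᶜ, |softmax α x i - (if i ∈ M then (1 : ℝ) / M.card else 0)| = R / S := by
      rw [hR, Finset.sum_div]
      refine Finset.sum_congr rfl fun i hi => ?_
      rw [if_neg (Finset.mem_compl.mp hi), sub_zero]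
      show |Real.exp (α * x i) / S| = Real.exp (α * x i) / S
      rw [abs_of_nonneg (by positivity)]
    have hsum : ∑ i, |softmax α x i - (if i ∈ M then (1 : ℝ) / M.card else 0)| = 2 * R / S := by
      rw [← Finset.sum_add_sum_compl M, h1, h2]; ring
    rw [hsum]
    have hRle : R ≤ n * Real.exp (α * (xstar - δ)) := by
      calc R ≤ ∑ _j ∈ Mᶜ, Real.exp (α * (xstar - δ)) :=
            Finset.sum_le_sum fun j hj => Real.exp_le_exp.mpr (by
              have := hδle j (Finset.mem_compl.mp hj); nlinarith)
        _ = (Mᶜ.card : ℝ) * Real.exp (α * (xstar - δ)) := by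
            rw [Finset.sum_const, nsmul_eq_mul]
        _ ≤ n * Real.exp (α * (xstar - δ)) := by
            gcongr
            exact_mod_cast (Finset.card_le_univ Mᶜ).trans_eq (by simp)
    have hdiv : Real.exp (α * (xstar - δ)) / E = Real.exp (-α * δ) := by
      rw [hE, ← Real.exp_sub]; congr 1; ring
    calc 2 * R / S ≤ 2 * (n * Real.exp (α * (xstar - δ))) / E :=
          div_le_div₀ (by positivity) (by linarith) hEpos hES
      _ = 2 * n * (Real.exp (α * (xstar - δ)) / E) := by ring
      _ = 2 * n * Real.exp (-α * δ) := by rw [hdiv]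
  · intro hcard
    have hMuniv : M = Finset.univ := Finset.eq_univ_of_card M (by rw [hcard]; simp)
    have hx : ∀ i, x i = xstar := fun i => hxM i (hMuniv ▸ Finset.mem_univ i)
    have hn : 0 < n := hcard ▸ hmpos
    have hSval : S = n * Real.exp (α * xstar) := by
      rw [hS, Finset.sum_congr rfl fun j _ => by rw [hx j], Finset.sum_const, nsmul_eq_mul]
      simp
    funext i
    have hn0 : (0 : ℝ) < n := by exact_mod_cast hn
    simp only [softmax, hx i, hcard, hMuniv, Finset.mem_univ, if_true,
      Finset.card_univ, Fintype.card_fin]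
    rw [← hS, hSval]
    rw [div_eq_div_iff (mul_pos hn0 (Real.exp_pos _)).ne' hn0.ne']
    ring
end

section
/- Let P_L, P_F, M be metric spaces with metrics written ‖·−·‖₁ (probability simplices with ℓ1 metric). Suppose BR_F : P_L × M → P_F satisfies ‖BR_F(π_L, μ) − BR_F(π_L′, μ′)‖₁ ≤ d_F^L ‖π_L − π_L′‖₁ + d_F^μ ‖μ − μ′‖₁, and Γ : M × P_L × P_F → M satisfies ‖Γ(μ, π_L, π_F) − Γ(μ′, π_L′, π_F′)‖₁ ≤ d_μ^μ ‖μ − μ′‖₁ + d_μ^L ‖π_L − π_L′‖₁ + d_μ^F ‖π_F − π_F′‖₁, with all constants nonnegative and d_F^μ + d_μ^μ + d_μ^F < 1. Suppose for π_L and π_L′ there are fixed points (π_F*, μ*) and (π_F*′, μ*′) satisfying π_F* = BR_F(π_L, μ*), μ* = Γ(μ*, π_L, π_F*), and likewise for the primed quantities. Then ‖π_F* − π_F*′‖₁ + ‖μ* − μ*′‖₁ ≤ ((d_F^L + d_μ^L)/(1 − (d_F^μ + d_μ^μ + d_μ^F))) · ‖π_L − π_L′‖₁. -/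
/-! Adding the two Lipschitz estimates at the fixed points bounds
`e = ‖π_F − π_F′‖ + ‖μ − μ′‖` by `(d_F^L + d_μ^L) ‖π_L − π_L′‖ + (d_F^μ + d_μ^μ + d_μ^F) e`,
and the coefficient of `e` is below `1`, so `e` can be absorbed into the left-hand side. -/

theorem le_div_one_sub_of_le_add_mul {x c s : ℝ} (hs : s < 1) (h : x ≤ c + s * x) :
    x ≤ c / (1 - s) := by
  rw [le_div_iff₀ (sub_pos.2 hs)]
  linarith

theorem follower_equilibrium_lipschitz_in_leader_general
    {PL PF M : Type*} [MetricSpace PL] [MetricSpace PF] [MetricSpace M]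
    (BRF : PL → M → PF) (Γ : M → PL → PF → M)
    (dFL dFμ dμμ dμL dμF : ℝ)
    (hdFμ : 0 ≤ dFμ) (hdμμ : 0 ≤ dμμ) (hdμF : 0 ≤ dμF)
    (hBRF : ∀ (πL πL' : PL) (μ μ' : M),
      dist (BRF πL μ) (BRF πL' μ') ≤ dFL * dist πL πL' + dFμ * dist μ μ')
    (hΓ : ∀ (μ μ' : M) (πL πL' : PL) (πF πF' : PF),
      dist (Γ μ πL πF) (Γ μ' πL' πF')
        ≤ dμμ * dist μ μ' + dμL * dist πL πL' + dμF * dist πF πF')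
    (hsum : dFμ + dμμ + dμF < 1)
    (πL πL' : PL) (πF πF' : PF) (μ μ' : M)
    (hfixF : πF = BRF πL μ) (hfixμ : μ = Γ μ πL πF)
    (hfixF' : πF' = BRF πL' μ') (hfixμ' : μ' = Γ μ' πL' πF') :
    dist πF πF' + dist μ μ'
      ≤ ((dFL + dμL) / (1 - (dFμ + dμμ + dμF))) * dist πL πL' := by
  have hF : dist πF πF' ≤ dFL * dist πL πL' + dFμ * dist μ μ' := by
    rw [hfixF, hfixF']
    exact hBRF _ _ _ _
  have hμ : dist μ μ' ≤ dμμ * dist μ μ' + dμL * dist πL πL' + dμF * dist πF πF' := by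
    conv_lhs => rw [hfixμ, hfixμ']
    exact hΓ _ _ _ _ _ _
  have hcoupled : dist πF πF' + dist μ μ'
      ≤ (dFL + dμL) * dist πL πL' + (dFμ + dμμ + dμF) * (dist πF πF' + dist μ μ') := by
    have := mul_nonneg (add_nonneg hdFμ hdμμ) (dist_nonneg (x := πF) (y := πF'))
    have := mul_nonneg hdμF (dist_nonneg (x := μ) (y := μ'))
    linarith
  rw [div_mul_eq_mul_div]
  exact le_div_one_sub_of_le_add_mul hsum hcoupled

/-- Lipschitz dependence of the follower-side equilibrium on the leader's policy.
If `BR_F` and `Γ` are Lipschitz with the stated constants and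
`d_F^μ + d_μ^μ + d_μ^F < 1`, and `(π_F*, μ*)`, `(π_F*′, μ*′)` are the
follower/mean-field fixed points associated with `π_L` and `π_L′`, then
`‖π_F* − π_F*′‖ + ‖μ* − μ*′‖ ≤ ((d_F^L + d_μ^L)/(1 − (d_F^μ + d_μ^μ + d_μ^F))) ‖π_L − π_L′‖`. -/
theorem follower_equilibrium_lipschitz_in_leader
    {PL PF M : Type*} [MetricSpace PL] [MetricSpace PF] [MetricSpace M]
    (BRF : PL → M → PF) (Γ : M → PL → PF → M)
    (dFL dFμ dμμ dμL dμF : ℝ)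
    (hdFL : 0 ≤ dFL) (hdFμ : 0 ≤ dFμ) (hdμμ : 0 ≤ dμμ) (hdμL : 0 ≤ dμL) (hdμF : 0 ≤ dμF)
    (hBRF : ∀ (πL πL' : PL) (μ μ' : M),
      dist (BRF πL μ) (BRF πL' μ') ≤ dFL * dist πL πL' + dFμ * dist μ μ')
    (hΓ : ∀ (μ μ' : M) (πL πL' : PL) (πF πF' : PF),
      dist (Γ μ πL πF) (Γ μ' πL' πF')
        ≤ dμμ * dist μ μ' + dμL * dist πL πL' + dμF * dist πF πF')
    (hsum : dFμ + dμμ + dμF < 1)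
    (πL πL' : PL) (πF πF' : PF) (μ μ' : M)
    (hfixF : πF = BRF πL μ) (hfixμ : μ = Γ μ πL πF)
    (hfixF' : πF' = BRF πL' μ') (hfixμ' : μ' = Γ μ' πL' πF') :
    dist πF πF' + dist μ μ'
      ≤ ((dFL + dμL) / (1 - (dFμ + dμμ + dμF))) * dist πL πL' :=
  follower_equilibrium_lipschitz_in_leader_general BRF Γ dFL dFμ dμμ dμL dμF hdFμ hdμμ hdμF hBRF hΓ
    hsum πL πL' πF πF' μ μ' hfixF hfixμ hfixF' hfixμ'
end

section
/- Let P_L, P_F, M be complete metric spaces (probability simplices with ℓ1 metric). Suppose BR_F : P_L × M → P_F is Lipschitz with constants (d_F^L, d_F^μ), Γ : M × P_L × P_F → M is Lipschitz with constants (d_μ^μ, d_μ^L, d_μ^F), and BR_L : P_F × M → P_L satisfies ‖BR_L(π_F, μ) − BR_L(π_F′, μ′)‖₁ ≤ d_L^F ‖π_F − π_F′‖₁ + d_L^μ ‖μ − μ′‖₁, all constants nonnegative. Assume (i) d_μ^μ + d_μ^F d_F^μ < 1, (ii) d_F^μ + d_μ^μ + d_μ^F < 1 and (d_F^L + d_μ^L)/(1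 − (d_F^μ + d_μ^μ + d_μ^F)) < 1, and (iii) max(d_L^F, d_L^μ) · (d_F^L + d_μ^L)/(1 − (d_F^μ + d_μ^μ + d_μ^F)) < 1. Then there exists a unique triple (π_L^SE, π_F^SE, μ^SE) ∈ P_L × P_F × M such that π_F^SE = BR_F(π_L^SE, μ^SE), μ^SE = Γ(μ^SE, π_L^SE, π_F^SE), and π_L^SE = BR_L(π_F^SE, μ^SE); i.e., the stationary Stackelberg mean-field equilibrium exists and is unique. -/
/-!
For a fixed leader policy `πL`, the joint follower/mean-field update
`(πF, μ) ↦ (BR_F(πL, μ), Γ(μ, πL, πF))` is a contraction of `PF × M` with the `ℓ¹` metric,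
with constant `d_F^μ + d_μ^μ + d_μ^F`. Since it moves by at most `(d_F^L + d_μ^L) · dist πL πL'`
when `πL` changes, its fixed point depends on `πL` with Lipschitz constant
`(d_F^L + d_μ^L) / (1 - (d_F^μ + d_μ^μ + d_μ^F))`. The map `BR_L` is `max(d_L^F, d_L^μ)`-Lipschitz
for the `ℓ¹` metric, so composing it with that fixed point gives a contraction of `PL` by (iii).
An equilibrium is exactly a fixed point of this composite together with its inner fixed point,
so Banach's theorem, applied twice, gives existence and uniqueness.
-/

open scoped NNReal ENNReal
open Function

namespace ContractingWith

theorem lipschitzWith_fixedPoint {P X : Type*} [PseudoMetricSpace P] [MetricSpace X]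
    [CompleteSpace X] [Nonempty X] {K C : ℝ≥0} {T : P → X → X}
    (hT : ∀ p, ContractingWith K (T p)) (hC : ∀ x, LipschitzWith C fun p => T p x) :
    LipschitzWith (C / (1 - K)) fun p => fixedPoint (T p) (hT p) := by
  refine LipschitzWith.of_dist_le_mul fun p q => ?_
  have := (hT p).dist_fixedPoint_fixedPoint_of_dist_le' (T q) (hT p).fixedPoint_isFixedPt
    (hT q).fixedPoint_isFixedPt fun x => (hC x).dist_le_mul p q
  rwa [NNReal.coe_div, NNReal.coe_sub (hT p).1.le, NNReal.coe_one, div_mul_eq_mul_div]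

theorem existsUnique_isFixedPt_and_eq {P X : Type*} [MetricSpace P] [CompleteSpace P]
    [Nonempty P] [MetricSpace X] [CompleteSpace X] [Nonempty X] {K K' : ℝ≥0} {T : P → X → X}
    (hT : ∀ p, ContractingWith K (T p)) {G : X → P}
    (hG : ContractingWith K' fun p => G (fixedPoint (T p) (hT p))) :
    ∃! e : P × X, IsFixedPt (T e.1) e.2 ∧ G e.2 = e.1 := by
  set p₀ := fixedPoint _ hG
  refine ⟨(p₀, fixedPoint (T p₀) (hT p₀)),
    ⟨(hT p₀).fixedPoint_isFixedPt, hG.fixedPoint_isFixedPt⟩, ?_⟩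
  rintro ⟨p, x⟩ ⟨hx, hp⟩
  obtain rfl : x = fixedPoint (T p) (hT p) := (hT p).fixedPoint_unique hx
  obtain rfl : p = p₀ := hG.fixedPoint_unique hp
  rfl

end ContractingWith

namespace WithLp

instance {p : ℝ≥0∞} {V : Type*} [Nonempty V] : Nonempty (WithLp p V) :=
  (WithLp.equiv p V).nonempty

variable {α β γ : Type*} [PseudoMetricSpace α] [PseudoMetricSpace β]

theorem prod_one_dist_eq_add (x y : WithLp 1 (α × β)) :
    dist x y = dist x.fst y.fst + dist x.snd y.snd := by
  simp [prod_dist_eq_add (p := 1) (by norm_num)]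

theorem lipschitzWith_max_of_dist_le_add [PseudoMetricSpace γ] {f : α → β → γ} {Kα Kβ : ℝ≥0}
    (hf : ∀ a a' b b', dist (f a b) (f a' b') ≤ Kα * dist a a' + Kβ * dist b b') :
    LipschitzWith (max Kα Kβ) fun x : WithLp 1 (α × β) => f x.fst x.snd := by
  refine LipschitzWith.of_dist_le_mul fun x y => ?_
  rw [prod_one_dist_eq_add, mul_add]
  grw [hf]
  gcongr
  exacts [le_max_left _ _, le_max_right _ _]

end WithLp

section StackelbergMeanField

variable {PL PF M : Type*} (BRF : PL → M → PF) (Γ : M → PL → PF → M)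

/-- `ℓ¹` rather than the sup metric of `PF × M`, because the leader step needs `BR_L` to be
`max(d_L^F, d_L^μ)`-Lipschitz. -/
def followerMeanFieldMap (πL : PL) (p : WithLp 1 (PF × M)) : WithLp 1 (PF × M) :=
  WithLp.toLp 1 (BRF πL p.snd, Γ p.snd πL p.fst)

variable {BRF Γ}

theorem isFixedPt_followerMeanFieldMap_iff {πL : PL} {p : WithLp 1 (PF × M)} :
    IsFixedPt (followerMeanFieldMap BRF Γ πL) p ↔
      BRF πL p.snd = p.fst ∧ Γ p.snd πL p.fst = p.snd := by
  rw [IsFixedPt, followerMeanFieldMap, WithLp.ext_iff, Prod.ext_iff]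
  rfl

theorem contractingWith_followerMeanFieldMap [MetricSpace PF] [MetricSpace M]
    {dFμ dμμ dμF : ℝ≥0} (hk : dFμ + dμμ + dμF < 1) {πL : PL}
    (hBRF : ∀ μ μ', dist (BRF πL μ) (BRF πL μ') ≤ dFμ * dist μ μ')
    (hΓ : ∀ μ μ' πF πF', dist (Γ μ πL πF) (Γ μ' πL πF') ≤ dμμ * dist μ μ' + dμF * dist πF πF') :
    ContractingWith (dFμ + dμμ + dμF) (followerMeanFieldMap BRF Γ πL) := by
  refine ⟨hk, LipschitzWith.of_dist_le_mul fun p q => ?_⟩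
  simp only [followerMeanFieldMap, WithLp.prod_one_dist_eq_add, WithLp.toLp_fst,
    WithLp.toLp_snd]
  grw [hBRF, hΓ]
  push_cast
  nlinarith [dist_nonneg (x := p.fst) (y := q.fst), dist_nonneg (x := p.snd) (y := q.snd),
    dFμ.2, dμμ.2, dμF.2]

theorem lipschitzWith_followerMeanFieldMap_apply [MetricSpace PL] [MetricSpace PF] [MetricSpace M]
    {dFL dμL : ℝ≥0}
    (hBRF : ∀ μ, LipschitzWith dFL (BRF · μ)) (hΓ : ∀ μ πF, LipschitzWith dμL (Γ μ · πF))
    (p : WithLp 1 (PF × M)) :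
    LipschitzWith (dFL + dμL) fun πL => followerMeanFieldMap BRF Γ πL p := by
  refine LipschitzWith.of_dist_le_mul fun x y => ?_
  simp only [followerMeanFieldMap, WithLp.prod_one_dist_eq_add, WithLp.toLp_fst,
    WithLp.toLp_snd]
  grw [(hBRF _).dist_le_mul, (hΓ _ _).dist_le_mul]
  push_cast
  exact (add_mul _ _ _).ge

end StackelbergMeanField

theorem stackelberg_mfe_exists_unique_general
    {PL PF M : Type*} [MetricSpace PL] [MetricSpace PF] [MetricSpace M]
    [CompleteSpace PL] [CompleteSpace PF] [CompleteSpace M]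
    [Nonempty PL] [Nonempty PF] [Nonempty M]
    (BRF : PL → M → PF) (Γ : M → PL → PF → M) (BRL : PF → M → PL)
    (dFL dFμ dμμ dμL dμF dLF dLμ : ℝ)
    (hdFL : 0 ≤ dFL) (hdFμ : 0 ≤ dFμ) (hdμμ : 0 ≤ dμμ) (hdμL : 0 ≤ dμL)
    (hdμF : 0 ≤ dμF) (hdLF : 0 ≤ dLF) (hdLμ : 0 ≤ dLμ)
    (hBRF : ∀ (πL πL' : PL) (μ μ' : M),
      dist (BRF πL μ) (BRF πL' μ') ≤ dFL * dist πL πL' + dFμ * dist μ μ')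
    (hΓ : ∀ (μ μ' : M) (πL πL' : PL) (πF πF' : PF),
      dist (Γ μ πL πF) (Γ μ' πL' πF')
        ≤ dμμ * dist μ μ' + dμL * dist πL πL' + dμF * dist πF πF')
    (hBRL : ∀ (πF πF' : PF) (μ μ' : M),
      dist (BRL πF μ) (BRL πF' μ') ≤ dLF * dist πF πF' + dLμ * dist μ μ')
    (hii₁ : dFμ + dμμ + dμF < 1)
    (hiii : max dLF dLμ * ((dFL + dμL) / (1 - (dFμ + dμμ + dμF))) < 1) :
    ∃! e : PL × PF × M,
      e.2.1 = BRF e.1 e.2.2 ∧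
      e.2.2 = Γ e.2.2 e.1 e.2.1 ∧
      e.1 = BRL e.2.1 e.2.2 := by
  lift dFL to ℝ≥0 using hdFL
  lift dFμ to ℝ≥0 using hdFμ
  lift dμμ to ℝ≥0 using hdμμ
  lift dμL to ℝ≥0 using hdμL
  lift dμF to ℝ≥0 using hdμF
  lift dLF to ℝ≥0 using hdLF
  lift dLμ to ℝ≥0 using hdLμ
  have hk : dFμ + dμμ + dμF < 1 := by exact_mod_cast hii₁
  have hT : ∀ πL, ContractingWith (dFμ + dμμ + dμF) (followerMeanFieldMap BRF Γ πL) :=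
    fun πL => contractingWith_followerMeanFieldMap hk
      (fun μ μ' => by simpa using hBRF πL πL μ μ')
      (fun μ μ' πF πF' => by simpa using hΓ μ μ' πL πL πF πF')
  have hφ := ContractingWith.lipschitzWith_fixedPoint hT
    (lipschitzWith_followerMeanFieldMap_apply
      (fun μ => LipschitzWith.of_dist_le_mul fun x y => by simpa using hBRF x y μ μ)
      (fun μ πF => LipschitzWith.of_dist_le_mul fun x y => by simpa using hΓ μ μ x y πF πF))
  have hc : max dLF dLμ * ((dFL + dμL) / (1 - (dFμ + dμμ + dμF))) < 1 := by
    rw [← NNReal.coe_lt_coe, NNReal.coe_mul, NNReal.coe_div, NNReal.coe_sub hk.le]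
    exact_mod_cast hiii
  have hG := ContractingWith.existsUnique_isFixedPt_and_eq hT (G := fun p => BRL p.fst p.snd)
    ⟨hc, (WithLp.lipschitzWith_max_of_dist_le_add hBRL).comp hφ⟩
  refine ((Equiv.refl PL).prodCongr (WithLp.equiv 1 (PF × M))).existsUnique_congr
    (fun e => ?_) |>.mp hG
  rw [isFixedPt_followerMeanFieldMap_iff]
  simp only [eq_comm, and_assoc]
  rfl

/-- Existence and uniqueness of a stationary Stackelberg mean-field equilibrium.
Under the stated Lipschitz conditions on the follower best response `BR_F`, the
mean-field update `Γ`, and the leader best response `BR_L`, with the contraction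
conditions (i)–(iii), there exists a unique triple
`(π_L^SE, π_F^SE, μ^SE)` with `π_F^SE = BR_F(π_L^SE, μ^SE)`,
`μ^SE = Γ(μ^SE, π_L^SE, π_F^SE)` and `π_L^SE = BR_L(π_F^SE, μ^SE)`. -/
theorem stackelberg_mfe_exists_unique
    {PL PF M : Type*} [MetricSpace PL] [MetricSpace PF] [MetricSpace M]
    [CompleteSpace PL] [CompleteSpace PF] [CompleteSpace M]
    [Nonempty PL] [Nonempty PF] [Nonempty M]
    (BRF : PL → M → PF) (Γ : M → PL → PF → M) (BRL : PF → M → PL)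
    (dFL dFμ dμμ dμL dμF dLF dLμ : ℝ)
    (hdFL : 0 ≤ dFL) (hdFμ : 0 ≤ dFμ) (hdμμ : 0 ≤ dμμ) (hdμL : 0 ≤ dμL)
    (hdμF : 0 ≤ dμF) (hdLF : 0 ≤ dLF) (hdLμ : 0 ≤ dLμ)
    (hBRF : ∀ (πL πL' : PL) (μ μ' : M),
      dist (BRF πL μ) (BRF πL' μ') ≤ dFL * dist πL πL' + dFμ * dist μ μ')
    (hΓ : ∀ (μ μ' : M) (πL πL' : PL) (πF πF' : PF),
      dist (Γ μ πL πF) (Γ μ' πL' πF')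
        ≤ dμμ * dist μ μ' + dμL * dist πL πL' + dμF * dist πF πF')
    (hBRL : ∀ (πF πF' : PF) (μ μ' : M),
      dist (BRL πF μ) (BRL πF' μ') ≤ dLF * dist πF πF' + dLμ * dist μ μ')
    (hi : dμμ + dμF * dFμ < 1)
    (hii₁ : dFμ + dμμ + dμF < 1)
    (hii₂ : (dFL + dμL) / (1 - (dFμ + dμμ + dμF)) < 1)
    (hiii : max dLF dLμ * ((dFL + dμL) / (1 - (dFμ + dμμ + dμF))) < 1) :
    ∃! e : PL × PF × M,
      e.2.1 = BRF e.1 e.2.2 ∧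
      e.2.2 = Γ e.2.2 e.1 e.2.1 ∧
      e.1 = BRL e.2.1 e.2.2 :=
  stackelberg_mfe_exists_unique_general BRF Γ BRL dFL dFμ dμμ dμL dμF dLF dLμ hdFL hdFμ hdμμ hdμL
    hdμF hdLF hdLμ hBRF hΓ hBRL hii₁ hiii
end

section
/- Let S and A be nonempty finite subsets of normed spaces, each with ℓ1 diameter at most 1. Let γ ∈ [0, 1), let r̄ : S × A → ℝ satisfy |r̄(s₁, a) − r̄(s₂, a)| ≤ d_r ‖s₁ − s₂‖₁ for all a, and let P̄ : S × A → Δ(S) satisfy ‖P̄(·|s₁, a) − P̄(·|s₂, a)‖₁ ≤ d_P ‖s₁ − s₂‖₁ for all a, with d_r, d_P ≥ 0. Define the Bellman operator (T Q)(s) = max_{a ∈ A} [ r̄(s, a) + γ ∑_{s′ ∈ S} Q(s′) P̄(s′|s, a) ]. If Q : S → ℝ is d_K-Lipschitz with respect to ‖·‖₁ (i.e., |Q(s₁) − Q(s₂)| ≤ d_K ‖s₁ − s₂‖₁), then T Q is (d_r + γ d_K d_P / 2)-Lipschitz: |T Q(s₁) − T Q(s₂)| ≤ (d_r + γ d_K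 d_P / 2) ‖s₁ − s₂‖₁. -/
/-!
Each value `(T Q)(s)` is a maximum over actions, and a finite maximum is 1-Lipschitz for the
sup-distance of its arguments, so it suffices to bound the change of a single action-value
`rbar s a + γ 𝔼_{P̄(·|s,a)} Q` when `s` moves. The reward part changes by at most
`d_r ‖s₁ - s₂‖`. The difference of the expectations is `∑ Q (P̄₁ - P̄₂)`, and since `P̄₁ - P̄₂`
has total mass zero, `Q` may be replaced by `Q - c` with `c` the midpoint of the range of `Q`.
As `S` has diameter at most 1, the range of `Q` has length at most `d_K`, so `|Q - c| ≤ d_K / 2`;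
this is the origin of the factor `1/2`.
-/

/-- Bellman optimality operator of a discounted MDP with finite state set `S`,
finite action set `A`, reward `rbar` and transition kernel `Pbar`:
`(T Q)(s) = max_{a ∈ A} [ rbar s a + γ ∑_{s' ∈ S} Q s' · Pbar s a s' ]`. -/
noncomputable def bellman {V W : Type*} [NormedAddCommGroup V] [NormedAddCommGroup W]
    (S : Finset V) (A : Finset W) (hA : A.Nonempty) (γ : ℝ)
    (rbar : V → W → ℝ) (Pbar : V → W → V → ℝ) (Q : V → ℝ) : V → ℝ :=
  fun s => A.sup' hA (fun a => rbar s a + γ * ∑ s' ∈ S, Q s' * Pbar s a s')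

namespace Finset

variable {ι : Type*} {s : Finset ι}

lemma sup'_le_sup'_add {f g : ι → ℝ} {c : ℝ} (hs : s.Nonempty)
    (h : ∀ i ∈ s, f i ≤ g i + c) : s.sup' hs f ≤ s.sup' hs g + c :=
  sup'_le hs f fun i hi => (h i hi).trans (add_le_add_left (le_sup' g hi) c)

lemma abs_sup'_sub_sup'_le {f g : ι → ℝ} {c : ℝ} (hs : s.Nonempty)
    (h : ∀ i ∈ s, |f i - g i| ≤ c) : |s.sup' hs f - s.sup' hs g| ≤ c := by
  refine abs_sub_le_iff.2 ⟨sub_le_iff_le_add'.2 ?_, sub_le_iff_le_add'.2 ?_⟩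
  · exact sup'_le_sup'_add hs fun i hi => sub_le_iff_le_add'.1 (abs_sub_le_iff.1 (h i hi)).1
  · exact sup'_le_sup'_add hs fun i hi => sub_le_iff_le_add'.1 (abs_sub_le_iff.1 (h i hi)).2

lemma exists_abs_sub_le_half {f : ι → ℝ} {M : ℝ} (hs : s.Nonempty)
    (h : ∀ i ∈ s, ∀ j ∈ s, f i - f j ≤ M) : ∃ c, ∀ i ∈ s, |f i - c| ≤ M / 2 := by
  obtain ⟨imax, himax, hmax⟩ := exists_mem_eq_sup' hs f
  obtain ⟨imin, himin, hmin⟩ := exists_mem_eq_inf' hs f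
  have hosc := h imax himax imin himin
  refine ⟨(s.sup' hs f + s.inf' hs f) / 2, fun i hi => abs_le.2 ⟨?_, ?_⟩⟩
  · linarith [inf'_le f hi]
  · linarith [le_sup' f hi]

lemma abs_sum_mul_le_of_sum_eq_zero {f w : ι → ℝ} {c M : ℝ}
    (hw : ∑ i ∈ s, w i = 0) (hf : ∀ i ∈ s, |f i - c| ≤ M) :
    |∑ i ∈ s, f i * w i| ≤ M * ∑ i ∈ s, |w i| := by
  have hcentre : ∑ i ∈ s, f i * w i = ∑ i ∈ s, (f i - c) * w i := by
    simp only [sub_mul, sum_sub_distrib, ← mul_sum, hw, mul_zero, sub_zero]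
  calc |∑ i ∈ s, f i * w i| ≤ ∑ i ∈ s, |f i - c| * |w i| := by
        rw [hcentre]; simpa only [abs_mul] using abs_sum_le_sum_abs (fun i => (f i - c) * w i) s
    _ ≤ ∑ i ∈ s, M * |w i| := sum_le_sum fun i hi => by gcongr; exact hf i hi
    _ = M * ∑ i ∈ s, |w i| := (mul_sum _ _ _).symm

end Finset

open Finset

theorem bellman_lipschitz_general
    {V W : Type*} [NormedAddCommGroup V] [NormedAddCommGroup W]
    (S : Finset V) (A : Finset W) (hA : A.Nonempty)
    (hSdiam : ∀ s₁ ∈ S, ∀ s₂ ∈ S, ‖s₁ - s₂‖ ≤ 1)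
    (γ : ℝ) (hγ0 : 0 ≤ γ)
    (d_r d_P : ℝ)
    (rbar : V → W → ℝ) (Pbar : V → W → V → ℝ)
    (hr : ∀ a ∈ A, ∀ s₁ ∈ S, ∀ s₂ ∈ S,
      |rbar s₁ a - rbar s₂ a| ≤ d_r * ‖s₁ - s₂‖)
    (hPmem : ∀ s ∈ S, ∀ a ∈ A,
      (∀ s' ∈ S, 0 ≤ Pbar s a s') ∧ ∑ s' ∈ S, Pbar s a s' = 1)
    (hPlip : ∀ a ∈ A, ∀ s₁ ∈ S, ∀ s₂ ∈ S,
      ∑ s' ∈ S, |Pbar s₁ a s' - Pbar s₂ a s'| ≤ d_P * ‖s₁ - s₂‖)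
    (d_K : ℝ) (hdK : 0 ≤ d_K)
    (Q : V → ℝ)
    (hQ : ∀ s₁ ∈ S, ∀ s₂ ∈ S, |Q s₁ - Q s₂| ≤ d_K * ‖s₁ - s₂‖) :
    ∀ s₁ ∈ S, ∀ s₂ ∈ S,
      |bellman S A hA γ rbar Pbar Q s₁ - bellman S A hA γ rbar Pbar Q s₂|
        ≤ (d_r + γ * d_K * d_P / 2) * ‖s₁ - s₂‖ := by
  intro s₁ hs₁ s₂ hs₂
  obtain ⟨c, hc⟩ : ∃ c, ∀ s ∈ S, |Q s - c| ≤ d_K / 2 :=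
    exists_abs_sub_le_half ⟨s₁, hs₁⟩ fun s hs t ht =>
      calc Q s - Q t ≤ |Q s - Q t| := le_abs_self _
        _ ≤ d_K * ‖s - t‖ := hQ s hs t ht
        _ ≤ d_K := mul_le_of_le_one_right hdK (hSdiam s hs t ht)
  refine abs_sup'_sub_sup'_le hA fun a ha => ?_
  have hmass : ∑ s' ∈ S, (Pbar s₁ a s' - Pbar s₂ a s') = 0 := by
    rw [sum_sub_distrib, (hPmem s₁ hs₁ a ha).2, (hPmem s₂ hs₂ a ha).2, sub_self]
  have hexp : |∑ s' ∈ S, Q s' * Pbar s₁ a s' - ∑ s' ∈ S, Q s' * Pbar s₂ a s'|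
      ≤ d_K / 2 * (d_P * ‖s₁ - s₂‖) := by
    rw [← sum_sub_distrib]
    simp only [← mul_sub]
    exact (abs_sum_mul_le_of_sum_eq_zero hmass hc).trans
      (mul_le_mul_of_nonneg_left (hPlip a ha s₁ hs₁ s₂ hs₂) (by positivity))
  calc _ = |(rbar s₁ a - rbar s₂ a) + γ * (∑ s' ∈ S, Q s' * Pbar s₁ a s'
          - ∑ s' ∈ S, Q s' * Pbar s₂ a s')| := by ring_nf
    _ ≤ |rbar s₁ a - rbar s₂ a| + γ * |∑ s' ∈ S, Q s' * Pbar s₁ a s'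
          - ∑ s' ∈ S, Q s' * Pbar s₂ a s'| := by
        rw [← abs_of_nonneg hγ0, ← abs_mul, abs_of_nonneg hγ0]; exact abs_add_le _ _
    _ ≤ d_r * ‖s₁ - s₂‖ + γ * (d_K / 2 * (d_P * ‖s₁ - s₂‖)) := by
        gcongr; exact hr a ha s₁ hs₁ s₂ hs₂
    _ = (d_r + γ * d_K * d_P / 2) * ‖s₁ - s₂‖ := by ring

/-- If `rbar` is `d_r`-Lipschitz in the state, `Pbar` is `d_P`-Lipschitz in the state
in ℓ1, the state and action sets have diameter at most 1, and `Q` is `d_K`-Lipschitz,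
then `T Q` is `(d_r + γ d_K d_P / 2)`-Lipschitz on `S`. -/
theorem bellman_lipschitz
    {V W : Type*} [NormedAddCommGroup V] [NormedAddCommGroup W]
    (S : Finset V) (A : Finset W) (hS : S.Nonempty) (hA : A.Nonempty)
    (hSdiam : ∀ s₁ ∈ S, ∀ s₂ ∈ S, ‖s₁ - s₂‖ ≤ 1)
    (hAdiam : ∀ a₁ ∈ A, ∀ a₂ ∈ A, ‖a₁ - a₂‖ ≤ 1)
    (γ : ℝ) (hγ0 : 0 ≤ γ) (hγ1 : γ < 1)
    (d_r d_P : ℝ) (hdr : 0 ≤ d_r) (hdP : 0 ≤ d_P)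
    (rbar : V → W → ℝ) (Pbar : V → W → V → ℝ)
    (hr : ∀ a ∈ A, ∀ s₁ ∈ S, ∀ s₂ ∈ S,
      |rbar s₁ a - rbar s₂ a| ≤ d_r * ‖s₁ - s₂‖)
    (hPmem : ∀ s ∈ S, ∀ a ∈ A,
      (∀ s' ∈ S, 0 ≤ Pbar s a s') ∧ ∑ s' ∈ S, Pbar s a s' = 1)
    (hPlip : ∀ a ∈ A, ∀ s₁ ∈ S, ∀ s₂ ∈ S,
      ∑ s' ∈ S, |Pbar s₁ a s' - Pbar s₂ a s'| ≤ d_P * ‖s₁ - s₂‖)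
    (d_K : ℝ) (hdK : 0 ≤ d_K)
    (Q : V → ℝ)
    (hQ : ∀ s₁ ∈ S, ∀ s₂ ∈ S, |Q s₁ - Q s₂| ≤ d_K * ‖s₁ - s₂‖) :
    ∀ s₁ ∈ S, ∀ s₂ ∈ S,
      |bellman S A hA γ rbar Pbar Q s₁ - bellman S A hA γ rbar Pbar Q s₂|
        ≤ (d_r + γ * d_K * d_P / 2) * ‖s₁ - s₂‖ :=
  bellman_lipschitz_general S A hA hSdiam γ hγ0 d_r d_P rbar Pbar hr hPmem hPlip d_K hdK Q hQ
end

section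
/- Let S and A be nonempty finite subsets of normed spaces, each with ℓ1 diameter at most 1. Let γ ∈ [0, 1), d_r, d_P ≥ 0 with γ d_P / 2 < 1. Let r̄ : S × A → ℝ satisfy |r̄(s₁, a) − r̄(s₂, a)| ≤ d_r ‖s₁ − s₂‖₁, let P̄ : S × A → Δ(S) satisfy ‖P̄(·|s₁, a) − P̄(·|s₂, a)‖₁ ≤ d_P ‖s₁ − s₂‖₁, and define the Bellman operator (T Q)(s) = max_{a ∈ A} [ r̄(s, a) + γ ∑_{s′} Q(s′) P̄(s′|s, a) ]. Then T has a unique fixed point Q* : S → ℝ, and Q* is Lipschitz in the state with constant d_r / (1 − γ d_P / 2): |Q*(s₁) − Q*(s₂)| ≤ (d_r / (1 − γ d_P / 2)) ‖s₁ − s₂‖₁ for all s₁, s₂ ∈ S. -/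
open scoped NNReal

theorem Finset.abs_sup'_sub_sup'_le_s14 {ι : Type*} {A : Finset ι} (hA : A.Nonempty) {f g : ι → ℝ}
    {B : ℝ} (h : ∀ a ∈ A, |f a - g a| ≤ B) : |A.sup' hA f - A.sup' hA g| ≤ B := by
  rw [abs_sub_le_iff, sub_le_iff_le_add, sub_le_iff_le_add]
  constructor <;> refine Finset.sup'_le _ _ fun a ha => ?_ <;> have := abs_le.1 (h a ha)
  · linarith [Finset.le_sup' g ha]
  · linarith [Finset.le_sup' f ha]

theorem Finset.abs_sum_mul_le {ι : Type*} {S : Finset ι} {f w : ι → ℝ} {R : ℝ}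
    (hf : ∀ s ∈ S, |f s| ≤ R) : |∑ s ∈ S, f s * w s| ≤ R * ∑ s ∈ S, |w s| := by
  rw [Finset.mul_sum]
  refine (Finset.abs_sum_le_sum_abs _ _).trans (Finset.sum_le_sum fun s hs => ?_)
  rw [abs_mul]
  exact mul_le_mul_of_nonneg_right (hf s hs) (abs_nonneg _)

theorem Finset.abs_sum_mul_sub_sum_mul_le_of_sum_eq_one {ι : Type*} {S : Finset ι}
    {f g p : ι → ℝ} {d : ℝ} (hp : ∀ s ∈ S, 0 ≤ p s) (hp1 : ∑ s ∈ S, p s = 1)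
    (h : ∀ s ∈ S, |f s - g s| ≤ d) :
    |∑ s ∈ S, f s * p s - ∑ s ∈ S, g s * p s| ≤ d := by
  have hsum : ∑ s ∈ S, |p s| = 1 := by
    rw [← hp1]; exact Finset.sum_congr rfl fun s hs => abs_of_nonneg (hp s hs)
  simpa only [← Finset.sum_sub_distrib, ← sub_mul, hsum, mul_one] using
    Finset.abs_sum_mul_le (w := p) h

theorem Finset.abs_sum_mul_sub_sum_mul_le_of_sum_eq {ι : Type*} {S : Finset ι} {f p q : ι → ℝ}
    {c R : ℝ} (hpq : ∑ s ∈ S, p s = ∑ s ∈ S, q s) (hf : ∀ s ∈ S, |f s - c| ≤ R) :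
    |∑ s ∈ S, f s * p s - ∑ s ∈ S, f s * q s| ≤ R * ∑ s ∈ S, |p s - q s| := by
  have hcenter : ∑ s ∈ S, f s * p s - ∑ s ∈ S, f s * q s =
      ∑ s ∈ S, (f s - c) * (p s - q s) := by
    simp only [sub_mul, mul_sub, Finset.sum_sub_distrib, ← Finset.mul_sum, hpq]
    ring
  rw [hcenter]
  exact Finset.abs_sum_mul_le hf

theorem exists_unique_isFixedPt_of_dist_le_on {V β : Type*} [MetricSpace β] [CompleteSpace β]
    [Nonempty β] (S : Finset V) (G : (V → β) → V → β) {K : ℝ≥0} (hK : K < 1)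
    (hloc : ∀ Q Q', (∀ s ∈ S, Q s = Q' s) → G Q = G Q')
    (hdist : ∀ Q Q' d, (∀ s ∈ S, dist (Q s) (Q' s) ≤ d) →
      ∀ s ∈ S, dist (G Q s) (G Q' s) ≤ K * d) :
    ∃! Q, G Q = Q := by
  classical
  let extend (q : S → β) (v : V) : β := if h : v ∈ S then q ⟨v, h⟩ else Classical.arbitrary β
  have extend_apply (q : S → β) {v : V} (hv : v ∈ S) : extend q v = q ⟨v, hv⟩ := dif_pos hv
  let F (q : S → β) (s : S) : β := G (extend q) s
  have hF : ContractingWith K F := by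
    refine ⟨hK, LipschitzWith.of_dist_le_mul fun q q' => ?_⟩
    refine (dist_pi_le_iff (by positivity)).2 fun s => hdist _ _ _ (fun v hv => ?_) s s.2
    simpa only [extend_apply _ hv] using dist_le_pi_dist q q' ⟨v, hv⟩
  have hG_extend (Q : V → β) : G (extend fun s => Q s) = G Q :=
    hloc _ _ fun v hv => extend_apply (fun s => Q s) hv
  refine ⟨G (extend (hF.fixedPoint F)), hloc _ _ fun v hv => ?_, fun Q hQ => ?_⟩
  · exact (congrFun hF.fixedPoint_isFixedPt ⟨v, hv⟩).trans (extend_apply _ hv).symm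
  · have hfix : Function.IsFixedPt F fun s => Q s := funext fun s => by
      simp only [F, hG_extend, hQ]
    rw [← hQ, ← hG_extend, hF.fixedPoint_unique hfix]

section Bellman

variable {V W : Type*} [NormedAddCommGroup V] [NormedAddCommGroup W]
  {S : Finset V} {A : Finset W} {hA : A.Nonempty} {γ : ℝ} {rbar : V → W → ℝ}
  {Pbar : V → W → V → ℝ}

theorem bellman_congr {Q Q' : V → ℝ} (h : ∀ s ∈ S, Q s = Q' s) :
    bellman S A hA γ rbar Pbar Q = bellman S A hA γ rbar Pbar Q' := by
  funext s
  refine Finset.sup'_congr hA rfl fun a _ => ?_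
  rw [Finset.sum_congr rfl fun s' hs' => by rw [h s' hs']]

theorem abs_bellman_sub_bellman_le (hγ : 0 ≤ γ)
    (hP : ∀ s ∈ S, ∀ a ∈ A, (∀ s' ∈ S, 0 ≤ Pbar s a s') ∧ ∑ s' ∈ S, Pbar s a s' = 1)
    {Q Q' : V → ℝ} {d : ℝ} (h : ∀ s ∈ S, |Q s - Q' s| ≤ d) {s : V} (hs : s ∈ S) :
    |bellman S A hA γ rbar Pbar Q s - bellman S A hA γ rbar Pbar Q' s| ≤ γ * d := by
  refine Finset.abs_sup'_sub_sup'_le_s14 hA fun a ha => ?_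
  obtain ⟨hP0, hP1⟩ := hP s hs a ha
  rw [add_sub_add_left_eq_sub, ← mul_sub, abs_mul, abs_of_nonneg hγ]
  exact mul_le_mul_of_nonneg_left
    (Finset.abs_sum_mul_sub_sum_mul_le_of_sum_eq_one hP0 hP1 h) hγ

theorem abs_bellman_sub_bellman_le_mul_norm (hγ : 0 ≤ γ) {d_r d_P : ℝ}
    (hr : ∀ a ∈ A, ∀ s₁ ∈ S, ∀ s₂ ∈ S, |rbar s₁ a - rbar s₂ a| ≤ d_r * ‖s₁ - s₂‖)
    (hP : ∀ s ∈ S, ∀ a ∈ A, ∑ s' ∈ S, Pbar s a s' = 1)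
    (hPlip : ∀ a ∈ A, ∀ s₁ ∈ S, ∀ s₂ ∈ S,
      ∑ s' ∈ S, |Pbar s₁ a s' - Pbar s₂ a s'| ≤ d_P * ‖s₁ - s₂‖)
    {Q : V → ℝ} {c R : ℝ} (hQ : ∀ s ∈ S, |Q s - c| ≤ R) {s₁ s₂ : V} (hs₁ : s₁ ∈ S)
    (hs₂ : s₂ ∈ S) :
    |bellman S A hA γ rbar Pbar Q s₁ - bellman S A hA γ rbar Pbar Q s₂| ≤
      (d_r + γ * d_P * R) * ‖s₁ - s₂‖ := by
  have hR : 0 ≤ R := (abs_nonneg _).trans (hQ s₁ hs₁)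
  refine Finset.abs_sup'_sub_sup'_le_s14 hA fun a ha => ?_
  have hsum : |∑ s' ∈ S, Q s' * Pbar s₁ a s' - ∑ s' ∈ S, Q s' * Pbar s₂ a s'| ≤
      R * (d_P * ‖s₁ - s₂‖) :=
    (Finset.abs_sum_mul_sub_sum_mul_le_of_sum_eq (by rw [hP s₁ hs₁ a ha, hP s₂ hs₂ a ha])
      hQ).trans (mul_le_mul_of_nonneg_left (hPlip a ha s₁ hs₁ s₂ hs₂) hR)
  calc |rbar s₁ a + γ * ∑ s' ∈ S, Q s' * Pbar s₁ a s' -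
        (rbar s₂ a + γ * ∑ s' ∈ S, Q s' * Pbar s₂ a s')|
      = |(rbar s₁ a - rbar s₂ a) +
          γ * (∑ s' ∈ S, Q s' * Pbar s₁ a s' - ∑ s' ∈ S, Q s' * Pbar s₂ a s')| := by
        congr 1; ring
    _ ≤ |rbar s₁ a - rbar s₂ a| +
          γ * |∑ s' ∈ S, Q s' * Pbar s₁ a s' - ∑ s' ∈ S, Q s' * Pbar s₂ a s'| := by
        exact (abs_add_le _ _).trans_eq (by rw [abs_mul, abs_of_nonneg hγ])
    _ ≤ d_r * ‖s₁ - s₂‖ + γ * (R * (d_P * ‖s₁ - s₂‖)) :=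
        add_le_add (hr a ha s₁ hs₁ s₂ hs₂) (mul_le_mul_of_nonneg_left hsum hγ)
    _ = (d_r + γ * d_P * R) * ‖s₁ - s₂‖ := by ring

end Bellman

theorem abs_sub_le_of_forall_abs_sub_center_le {V : Type*} [SeminormedAddCommGroup V]
    {S : Finset V} (hdiam : ∀ s₁ ∈ S, ∀ s₂ ∈ S, ‖s₁ - s₂‖ ≤ 1) {f : V → ℝ} {L κ : ℝ}
    (hL : 0 ≤ L) (hκ0 : 0 ≤ κ) (hκ2 : κ / 2 < 1)
    (h : ∀ c R, (∀ s ∈ S, |f s - c| ≤ R) →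
      ∀ s₁ ∈ S, ∀ s₂ ∈ S, |f s₁ - f s₂| ≤ (L + κ * R) * ‖s₁ - s₂‖)
    {s₁ s₂ : V} (hs₁ : s₁ ∈ S) (hs₂ : s₂ ∈ S) :
    |f s₁ - f s₂| ≤ L / (1 - κ / 2) * ‖s₁ - s₂‖ := by
  have hS : S.Nonempty := ⟨s₁, hs₁⟩
  set M := S.sup' hS f
  set m := S.inf' hS f
  have hcenter : ∀ s ∈ S, |f s - (M + m) / 2| ≤ (M - m) / 2 := fun s hs => by
    have : f s ≤ M := S.le_sup' f hs
    have : m ≤ f s := S.inf'_le f hs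
    rw [abs_le]; constructor <;> linarith
  set R := (M - m) / 2 with hR_def
  have hosc := h _ _ hcenter
  have hR : 0 ≤ R := (abs_nonneg _).trans (hcenter s₁ hs₁)
  have hcoef : 0 ≤ L + κ * R := by positivity
  have hRle : R ≤ L / (2 - κ) := by
    obtain ⟨sM, hsM, hM⟩ : ∃ s ∈ S, M = f s := S.exists_mem_eq_sup' hS f
    obtain ⟨sm, hsm, hm⟩ : ∃ s ∈ S, m = f s := S.exists_mem_eq_inf' hS f
    have : 2 * R ≤ L + κ * R := calc
      2 * R = f sM - f sm := by rw [hR_def, ← hM, ← hm]; ring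
      _ ≤ |f sM - f sm| := le_abs_self _
      _ ≤ (L + κ * R) * ‖sM - sm‖ := hosc sM hsM sm hsm
      _ ≤ L + κ * R := mul_le_of_le_one_right hcoef (hdiam sM hsM sm hsm)
    rw [le_div_iff₀ (by linarith)]
    linarith
  calc |f s₁ - f s₂| ≤ (L + κ * R) * ‖s₁ - s₂‖ := hosc s₁ hs₁ s₂ hs₂
    _ ≤ (L + κ * (L / (2 - κ))) * ‖s₁ - s₂‖ := by gcongr
    _ = L / (1 - κ / 2) * ‖s₁ - s₂‖ := by
      have : 2 - κ ≠ 0 := by linarith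
      field_simp
      ring

theorem bellman_fixed_point_lipschitz_general
    {V W : Type*} [NormedAddCommGroup V] [NormedAddCommGroup W]
    (S : Finset V) (A : Finset W) (hA : A.Nonempty)
    (hSdiam : ∀ s₁ ∈ S, ∀ s₂ ∈ S, ‖s₁ - s₂‖ ≤ 1)
    (γ : ℝ) (hγ0 : 0 ≤ γ) (hγ1 : γ < 1)
    (d_r d_P : ℝ) (hdr : 0 ≤ d_r) (hdP : 0 ≤ d_P) (hγdP : γ * d_P / 2 < 1)
    (rbar : V → W → ℝ) (Pbar : V → W → V → ℝ)
    (hr : ∀ a ∈ A, ∀ s₁ ∈ S, ∀ s₂ ∈ S,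
      |rbar s₁ a - rbar s₂ a| ≤ d_r * ‖s₁ - s₂‖)
    (hPmem : ∀ s ∈ S, ∀ a ∈ A,
      (∀ s' ∈ S, 0 ≤ Pbar s a s') ∧ ∑ s' ∈ S, Pbar s a s' = 1)
    (hPlip : ∀ a ∈ A, ∀ s₁ ∈ S, ∀ s₂ ∈ S,
      ∑ s' ∈ S, |Pbar s₁ a s' - Pbar s₂ a s'| ≤ d_P * ‖s₁ - s₂‖) :
    ∃ Qstar : V → ℝ,
      (∀ s, Qstar s = bellman S A hA γ rbar Pbar Qstar s) ∧
      (∀ Q' : V → ℝ, (∀ s, Q' s = bellman S A hA γ rbar Pbar Q' s) → Q' = Qstar) ∧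
      (∀ s₁ ∈ S, ∀ s₂ ∈ S,
        |Qstar s₁ - Qstar s₂| ≤ (d_r / (1 - γ * d_P / 2)) * ‖s₁ - s₂‖) := by
  obtain ⟨Qstar, hfix, huniq⟩ := exists_unique_isFixedPt_of_dist_le_on S
    (bellman S A hA γ rbar Pbar) (K := ⟨γ, hγ0⟩) hγ1 (fun _ _ => bellman_congr)
    fun _ _ _ h _ hs => abs_bellman_sub_bellman_le hγ0 hPmem h hs
  refine ⟨Qstar, fun s => (congrFun hfix s).symm,
    fun Q' hQ' => huniq Q' (funext fun s => (hQ' s).symm), fun s₁ hs₁ s₂ hs₂ => ?_⟩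
  refine abs_sub_le_of_forall_abs_sub_center_le hSdiam hdr (by positivity) hγdP
    (fun c R hR t₁ ht₁ t₂ ht₂ => ?_) hs₁ hs₂
  simpa only [hfix] using abs_bellman_sub_bellman_le_mul_norm (hA := hA) hγ0 hr
    (fun s hs a ha => (hPmem s hs a ha).2) hPlip hR ht₁ ht₂

/-- The Bellman operator has a unique fixed point `Q*`, and `Q*` is Lipschitz in
the state with constant `d_r / (1 − γ d_P / 2)`. -/
theorem bellman_fixed_point_lipschitz
    {V W : Type*} [NormedAddCommGroup V] [NormedAddCommGroup W]
    (S : Finset V) (A : Finset W) (hS : S.Nonempty) (hA : A.Nonempty)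
    (hSdiam : ∀ s₁ ∈ S, ∀ s₂ ∈ S, ‖s₁ - s₂‖ ≤ 1)
    (hAdiam : ∀ a₁ ∈ A, ∀ a₂ ∈ A, ‖a₁ - a₂‖ ≤ 1)
    (γ : ℝ) (hγ0 : 0 ≤ γ) (hγ1 : γ < 1)
    (d_r d_P : ℝ) (hdr : 0 ≤ d_r) (hdP : 0 ≤ d_P) (hγdP : γ * d_P / 2 < 1)
    (rbar : V → W → ℝ) (Pbar : V → W → V → ℝ)
    (hr : ∀ a ∈ A, ∀ s₁ ∈ S, ∀ s₂ ∈ S,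
      |rbar s₁ a - rbar s₂ a| ≤ d_r * ‖s₁ - s₂‖)
    (hPmem : ∀ s ∈ S, ∀ a ∈ A,
      (∀ s' ∈ S, 0 ≤ Pbar s a s') ∧ ∑ s' ∈ S, Pbar s a s' = 1)
    (hPlip : ∀ a ∈ A, ∀ s₁ ∈ S, ∀ s₂ ∈ S,
      ∑ s' ∈ S, |Pbar s₁ a s' - Pbar s₂ a s'| ≤ d_P * ‖s₁ - s₂‖) :
    ∃ Qstar : V → ℝ,
      (∀ s, Qstar s = bellman S A hA γ rbar Pbar Qstar s) ∧
      (∀ Q' : V → ℝ, (∀ s, Q' s = bellman S A hA γ rbar Pbar Q' s) → Q' = Qstar) ∧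
      (∀ s₁ ∈ S, ∀ s₂ ∈ S,
        |Qstar s₁ - Qstar s₂| ≤ (d_r / (1 - γ * d_P / 2)) * ‖s₁ - s₂‖) :=
  bellman_fixed_point_lipschitz_general S A hA hSdiam γ hγ0 hγ1 d_r d_P hdr hdP hγdP rbar Pbar hr
    hPmem hPlip
end

section
/- Under the hypotheses of the Bellman-Lipschitz setting (finite S, A of ℓ1 diameter at most 1, γ ∈ [0, 1), r̄ d_r-Lipschitz in s, P̄ d_P-Lipschitz in s in ℓ1, Bellman operator T as defined), if Q : S → ℝ is d_K-Lipschitz with d_K ≤ d_r, then for every n ≥ 1 and all s₁, s₂ ∈ S, |Tⁿ Q(s₁) − Tⁿ Q(s₂)| ≤ ( d_r ∑_{k=0}^{n−1} (γ d_P / 2)^k + d_K (γ d_P / 2)^n ) ‖s₁ − s₂‖₁. In particular, if additionally γ d_P / 2 ≤ 1, then |Tⁿ Q(s₁) − Tⁿ Q(s₂)| ≤ d_r ∑_{k=0}^{n} (γ d_P / 2)^k ‖s₁ − s₂‖₁. -/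
lemma sup'_abs_sub_le {α : Type*} (A : Finset α) (hA : A.Nonempty) (f g : α → ℝ) (C : ℝ)
    (h : ∀ a ∈ A, |f a - g a| ≤ C) :
    |A.sup' hA f - A.sup' hA g| ≤ C := by
  rw [abs_sub_le_iff]
  constructor
  · rw [sub_le_iff_le_add]
    apply Finset.sup'_le
    intro a ha
    have h1 := (abs_sub_le_iff.mp (h a ha)).1
    have h2 : g a ≤ A.sup' hA g := Finset.le_sup' g ha
    linarith
  · rw [sub_le_iff_le_add]
    apply Finset.sup'_le
    intro a ha
    have h1 := (abs_sub_le_iff.mp (h a ha)).2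
    have h2 : f a ≤ A.sup' hA f := Finset.le_sup' f ha
    linarith

lemma bellman_step {V W : Type*} [NormedAddCommGroup V] [NormedAddCommGroup W]
    (S : Finset V) (A : Finset W) (hS : S.Nonempty) (hA : A.Nonempty)
    (hSdiam : ∀ s₁ ∈ S, ∀ s₂ ∈ S, ‖s₁ - s₂‖ ≤ 1)
    (γ : ℝ) (hγ0 : 0 ≤ γ)
    (d_r d_P : ℝ)
    (rbar : V → W → ℝ) (Pbar : V → W → V → ℝ)
    (hr : ∀ a ∈ A, ∀ s₁ ∈ S, ∀ s₂ ∈ S,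
      |rbar s₁ a - rbar s₂ a| ≤ d_r * ‖s₁ - s₂‖)
    (hPmem : ∀ s ∈ S, ∀ a ∈ A,
      (∀ s' ∈ S, 0 ≤ Pbar s a s') ∧ ∑ s' ∈ S, Pbar s a s' = 1)
    (hPlip : ∀ a ∈ A, ∀ s₁ ∈ S, ∀ s₂ ∈ S,
      ∑ s' ∈ S, |Pbar s₁ a s' - Pbar s₂ a s'| ≤ d_P * ‖s₁ - s₂‖)
    (L : ℝ) (hL0 : 0 ≤ L) (Q : V → ℝ)
    (hQ : ∀ s₁ ∈ S, ∀ s₂ ∈ S, |Q s₁ - Q s₂| ≤ L * ‖s₁ - s₂‖) :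
    ∀ s₁ ∈ S, ∀ s₂ ∈ S,
      |bellman S A hA γ rbar Pbar Q s₁ - bellman S A hA γ rbar Pbar Q s₂|
        ≤ (d_r + γ * d_P / 2 * L) * ‖s₁ - s₂‖ := by
  intro s₁ hs₁ s₂ hs₂
  apply sup'_abs_sub_le
  intro a ha
  set c : ℝ := (S.sup' hS Q + S.inf' hS Q) / 2 with hc
  have hQc : ∀ s' ∈ S, |Q s' - c| ≤ L / 2 := by
    intro s' hs'
    obtain ⟨smax, hsmax, hmax⟩ := S.exists_mem_eq_sup' hS Q
    obtain ⟨smin, hsmin, hmin⟩ := S.exists_mem_eq_inf' hS Q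
    have hMm : S.sup' hS Q - S.inf' hS Q ≤ L := by
      rw [hmax, hmin]
      have h1 := hQ smax hsmax smin hsmin
      have h2 := hSdiam smax hsmax smin hsmin
      have h3 : Q smax - Q smin ≤ L * ‖smax - smin‖ := le_trans (le_abs_self _) h1
      nlinarith
    have hle : Q s' ≤ S.sup' hS Q := Finset.le_sup' Q hs'
    have hge : S.inf' hS Q ≤ Q s' := Finset.inf'_le Q hs'
    rw [abs_le]; constructor <;> [skip; skip] <;> simp only [hc] <;> linarith
  have key : ∑ s' ∈ S, Q s' * Pbar s₁ a s' - ∑ s' ∈ S, Q s' * Pbar s₂ a s'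
      = ∑ s' ∈ S, (Q s' - c) * (Pbar s₁ a s' - Pbar s₂ a s') := by
    have h1 := (hPmem s₁ hs₁ a ha).2
    have h2 := (hPmem s₂ hs₂ a ha).2
    have expand : ∑ s' ∈ S, (Q s' - c) * (Pbar s₁ a s' - Pbar s₂ a s')
        = (∑ s' ∈ S, Q s' * Pbar s₁ a s') - (∑ s' ∈ S, Q s' * Pbar s₂ a s')
          - c * (∑ s' ∈ S, Pbar s₁ a s') + c * (∑ s' ∈ S, Pbar s₂ a s') := by
      rw [Finset.mul_sum, Finset.mul_sum, ← Finset.sum_sub_distrib,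
        ← Finset.sum_sub_distrib, ← Finset.sum_add_distrib]
      exact Finset.sum_congr rfl (fun x _ => by ring)
    rw [expand, h1, h2]; ring
  have hsum : |∑ s' ∈ S, Q s' * Pbar s₁ a s' - ∑ s' ∈ S, Q s' * Pbar s₂ a s'|
      ≤ L / 2 * (d_P * ‖s₁ - s₂‖) := by
    rw [key]
    calc |∑ s' ∈ S, (Q s' - c) * (Pbar s₁ a s' - Pbar s₂ a s')|
        ≤ ∑ s' ∈ S, |(Q s' - c) * (Pbar s₁ a s' - Pbar s₂ a s')| :=
          Finset.abs_sum_le_sum_abs _ _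
      _ ≤ ∑ s' ∈ S, L / 2 * |Pbar s₁ a s' - Pbar s₂ a s'| := by
          apply Finset.sum_le_sum
          intro s' hs'
          rw [abs_mul]
          exact mul_le_mul_of_nonneg_right (hQc s' hs') (abs_nonneg _)
      _ = L / 2 * ∑ s' ∈ S, |Pbar s₁ a s' - Pbar s₂ a s'| := by rw [Finset.mul_sum]
      _ ≤ L / 2 * (d_P * ‖s₁ - s₂‖) := by
          apply mul_le_mul_of_nonneg_left (hPlip a ha s₁ hs₁ s₂ hs₂) (by linarith)
  have hrb := hr a ha s₁ hs₁ s₂ hs₂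
  calc |(rbar s₁ a + γ * ∑ s' ∈ S, Q s' * Pbar s₁ a s')
        - (rbar s₂ a + γ * ∑ s' ∈ S, Q s' * Pbar s₂ a s')|
      = |(rbar s₁ a - rbar s₂ a)
          + γ * (∑ s' ∈ S, Q s' * Pbar s₁ a s' - ∑ s' ∈ S, Q s' * Pbar s₂ a s')| := by
        ring_nf
    _ ≤ |rbar s₁ a - rbar s₂ a|
          + |γ * (∑ s' ∈ S, Q s' * Pbar s₁ a s' - ∑ s' ∈ S, Q s' * Pbar s₂ a s')| :=
        abs_add_le _ _
    _ ≤ d_r * ‖s₁ - s₂‖ + γ * (L / 2 * (d_P * ‖s₁ - s₂‖)) := by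
        rw [abs_mul, abs_of_nonneg hγ0]
        exact add_le_add hrb (mul_le_mul_of_nonneg_left hsum hγ0)
    _ = (d_r + γ * d_P / 2 * L) * ‖s₁ - s₂‖ := by ring

/-- Lipschitz constants of Bellman iterates: if `Q` is `d_K`-Lipschitz with
`d_K ≤ d_r`, then `Tⁿ Q` is
`(d_r ∑_{k<n} (γ d_P/2)^k + d_K (γ d_P/2)^n)`-Lipschitz on `S` for all `n ≥ 1`;
in particular, if `γ d_P / 2 ≤ 1`, it is `d_r ∑_{k≤n} (γ d_P/2)^k`-Lipschitz. -/
theorem bellman_iterate_lipschitz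
    {V W : Type*} [NormedAddCommGroup V] [NormedAddCommGroup W]
    (S : Finset V) (A : Finset W) (hS : S.Nonempty) (hA : A.Nonempty)
    (hSdiam : ∀ s₁ ∈ S, ∀ s₂ ∈ S, ‖s₁ - s₂‖ ≤ 1)
    (hAdiam : ∀ a₁ ∈ A, ∀ a₂ ∈ A, ‖a₁ - a₂‖ ≤ 1)
    (γ : ℝ) (hγ0 : 0 ≤ γ) (hγ1 : γ < 1)
    (d_r d_P : ℝ) (hdr : 0 ≤ d_r) (hdP : 0 ≤ d_P)
    (rbar : V → W → ℝ) (Pbar : V → W → V → ℝ)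
    (hr : ∀ a ∈ A, ∀ s₁ ∈ S, ∀ s₂ ∈ S,
      |rbar s₁ a - rbar s₂ a| ≤ d_r * ‖s₁ - s₂‖)
    (hPmem : ∀ s ∈ S, ∀ a ∈ A,
      (∀ s' ∈ S, 0 ≤ Pbar s a s') ∧ ∑ s' ∈ S, Pbar s a s' = 1)
    (hPlip : ∀ a ∈ A, ∀ s₁ ∈ S, ∀ s₂ ∈ S,
      ∑ s' ∈ S, |Pbar s₁ a s' - Pbar s₂ a s'| ≤ d_P * ‖s₁ - s₂‖)
    (d_K : ℝ) (hdK0 : 0 ≤ d_K) (hdK : d_K ≤ d_r)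
    (Q : V → ℝ)
    (hQ : ∀ s₁ ∈ S, ∀ s₂ ∈ S, |Q s₁ - Q s₂| ≤ d_K * ‖s₁ - s₂‖) :
    ∀ n : ℕ, 1 ≤ n → ∀ s₁ ∈ S, ∀ s₂ ∈ S,
      (|(bellman S A hA γ rbar Pbar)^[n] Q s₁ - (bellman S A hA γ rbar Pbar)^[n] Q s₂|
        ≤ (d_r * ∑ k ∈ Finset.range n, (γ * d_P / 2) ^ k
            + d_K * (γ * d_P / 2) ^ n) * ‖s₁ - s₂‖) ∧
      (γ * d_P / 2 ≤ 1 →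
        |(bellman S A hA γ rbar Pbar)^[n] Q s₁ - (bellman S A hA γ rbar Pbar)^[n] Q s₂|
          ≤ d_r * (∑ k ∈ Finset.range (n + 1), (γ * d_P / 2) ^ k) * ‖s₁ - s₂‖) := by
  set q : ℝ := γ * d_P / 2 with hq
  have hq0 : 0 ≤ q := by positivity
  set T := bellman S A hA γ rbar Pbar with hT
  have main : ∀ n : ℕ, ∀ s₁ ∈ S, ∀ s₂ ∈ S,
      |T^[n] Q s₁ - T^[n] Q s₂|
        ≤ (d_r * ∑ k ∈ Finset.range n, q ^ k + d_K * q ^ n) * ‖s₁ - s₂‖ := by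
    intro n
    induction n with
    | zero => simpa using hQ
    | succ n ih =>
      intro s₁ hs₁ s₂ hs₂
      set L : ℝ := d_r * ∑ k ∈ Finset.range n, q ^ k + d_K * q ^ n with hL
      have hL0 : 0 ≤ L := by
        apply add_nonneg
        · exact mul_nonneg hdr (Finset.sum_nonneg fun k _ => pow_nonneg hq0 k)
        · exact mul_nonneg hdK0 (pow_nonneg hq0 n)
      have step := bellman_step S A hS hA hSdiam γ hγ0 d_r d_P rbar Pbar hr hPmem hPlip
        L hL0 (T^[n] Q) ih s₁ hs₁ s₂ hs₂
      rw [Function.iterate_succ_apply']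
      have hsum : ∑ k ∈ Finset.range (n + 1), q ^ k = q * ∑ k ∈ Finset.range n, q ^ k + 1 := by
        rw [Finset.sum_range_succ']
        simp only [pow_succ, pow_zero]
        rw [← Finset.sum_mul]
        ring
      have heq : d_r + γ * d_P / 2 * L
          = d_r * ∑ k ∈ Finset.range (n + 1), q ^ k + d_K * q ^ (n + 1) := by
        rw [hsum, hL]
        simp only [← hq, pow_succ]
        ring
      rw [heq] at step
      exact step
  intro n _ s₁ hs₁ s₂ hs₂
  refine ⟨main n s₁ hs₁ s₂ hs₂, fun _ => ?_⟩
  refine le_trans (main n s₁ hs₁ s₂ hs₂) ?_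
  apply mul_le_mul_of_nonneg_right _ (norm_nonneg _)
  rw [Finset.sum_range_succ, mul_add]
  exact add_le_add_right (mul_le_mul_of_nonneg_right hdK (pow_nonneg hq0 n)) _
end

section
/- Let S, A, A† be nonempty finite subsets of normed spaces, each with ℓ1 diameter at most 1, let γ ∈ [0, 1), and let d_r, d_P ≥ 0 with γ d_P / 2 < 1. Let r̄ : S × A × Δ(A†) → ℝ and P̄ : S × A × Δ(A†) → Δ(S) satisfy, for all s, s′ ∈ S, a ∈ A, π, π′ ∈ Δ(A†): |r̄(s, a, π) − r̄(s′, a, π′)| ≤ d_r (‖s − s′‖₁ + ‖π − π′‖₁) and ‖P̄(·|s, a, π) − P̄(·|s′, a, π′)‖₁ ≤ d_P (‖s − s′‖₁ + ‖π − π′‖₁). For each π ∈ Δ(A†), let Q*_π be the unique fixed point of the Bellman operator (T_π Q)(s) = max_{a ∈ A} [ r̄(s, a, π) + γ ∑_{s′} Q(s′) P̄(s′|s, a, π) ]. Set d_Q = d_r / (1 − γ d_P / 2). Then for all π₁, π₂ ∈ Δ(A†), ‖Q*_{π₁} − Q*_{π₂}‖_∞ ≤ d₀ ‖π₁ − π₂‖₁,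 where d₀ = (d_r + γ d_P d_Q / 2) / (1 − γ). -/
/-- The probability simplex over a finite subset `A` of a type, as functions. -/
def simplexOn {U : Type*} (A : Finset U) : Set (U → ℝ) :=
  {p | (∀ a ∈ A, 0 ≤ p a) ∧ ∑ a ∈ A, p a = 1}

/-!
`Q*_π` depends on `π` through the one-step data `r̄, P̄` and through the continuation value
`Q*_π` itself. As transition kernels are probability vectors, `∑ Q (P₁ - P₂)` sees `Q` only up to
an additive constant, so it is bounded by `sp(Q)/2 · ‖P₁ - P₂‖₁`, with `sp(Q) = max Q - min Q`
the span seminorm. Comparing two states of one MDP (at distance `≤ 1`) gives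
`sp(Q*_π) ≤ d_r + γ d_P sp(Q*_π)/2`, i.e. `sp(Q*_π) ≤ d_Q`. Comparing two policies at one state
gives `‖ΔQ‖_∞ ≤ d_r ‖Δπ‖₁ + γ (‖ΔQ‖_∞ + d_Q d_P ‖Δπ‖₁ / 2)`, which solves to the constant `d₀`.
-/

section SpanSeminorm

variable {ι : Type*} (s : Finset ι) (hs : s.Nonempty)

noncomputable def spanSeminorm (f : ι → ℝ) : ℝ := s.sup' hs f - s.inf' hs f

variable {s hs}

lemma spanSeminorm_nonneg (f : ι → ℝ) : 0 ≤ spanSeminorm s hs f :=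
  have ⟨_, hi⟩ := hs
  sub_nonneg.mpr ((Finset.inf'_le f hi).trans (Finset.le_sup' f hi))

lemma spanSeminorm_le {f : ι → ℝ} {B : ℝ} (h : ∀ i ∈ s, ∀ j ∈ s, f i - f j ≤ B) :
    spanSeminorm s hs f ≤ B := by
  obtain ⟨i, hi, hmax⟩ := Finset.exists_mem_eq_sup' hs f
  obtain ⟨j, hj, hmin⟩ := Finset.exists_mem_eq_inf' hs f
  rw [spanSeminorm, hmax, hmin]
  exact h i hi j hj

/-- Since `p - q` has total mass zero, `f` may be recentred at the midpoint of its range. -/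
lemma abs_sum_mul_sub_le_spanSeminorm_mul (f p q : ι → ℝ)
    (h : ∑ i ∈ s, p i = ∑ i ∈ s, q i) :
    |∑ i ∈ s, f i * (p i - q i)| ≤ spanSeminorm s hs f / 2 * ∑ i ∈ s, |p i - q i| := by
  set c := (s.sup' hs f + s.inf' hs f) / 2 with hc
  have hrecentre : ∑ i ∈ s, f i * (p i - q i) = ∑ i ∈ s, (f i - c) * (p i - q i) := by
    simp only [sub_mul, Finset.sum_sub_distrib, mul_sub, ← Finset.mul_sum, h]
    ring
  have hdev : ∀ i ∈ s, |f i - c| ≤ spanSeminorm s hs f / 2 := fun i hi => by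
    have := Finset.le_sup' f hi
    have := Finset.inf'_le f hi
    rw [abs_le, spanSeminorm, hc]
    constructor <;> linarith
  calc |∑ i ∈ s, f i * (p i - q i)|
      ≤ ∑ i ∈ s, |f i - c| * |p i - q i| := by
        rw [hrecentre]
        exact (Finset.abs_sum_le_sum_abs _ _).trans_eq (by simp only [abs_mul])
    _ ≤ ∑ i ∈ s, spanSeminorm s hs f / 2 * |p i - q i| :=
        Finset.sum_le_sum fun i hi => mul_le_mul_of_nonneg_right (hdev i hi) (abs_nonneg _)
    _ = spanSeminorm s hs f / 2 * ∑ i ∈ s, |p i - q i| := (Finset.mul_sum _ _ _).symm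

end SpanSeminorm

lemma abs_sum_mul_le_of_sum_eq_one {ι : Type*} {s : Finset ι} {g p : ι → ℝ} {M : ℝ}
    (hp0 : ∀ i ∈ s, 0 ≤ p i) (hp1 : ∑ i ∈ s, p i = 1) (hg : ∀ i ∈ s, |g i| ≤ M) :
    |∑ i ∈ s, g i * p i| ≤ M :=
  calc |∑ i ∈ s, g i * p i|
      ≤ ∑ i ∈ s, |g i| * p i := by
        refine (Finset.abs_sum_le_sum_abs _ _).trans (Finset.sum_le_sum fun i hi => ?_)
        rw [abs_mul, abs_of_nonneg (hp0 i hi)]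
    _ ≤ ∑ i ∈ s, M * p i :=
        Finset.sum_le_sum fun i hi => mul_le_mul_of_nonneg_right (hg i hi) (hp0 i hi)
    _ = M := by rw [← Finset.mul_sum, hp1, mul_one]

lemma abs_sup'_sub_sup'_le {ι : Type*} {s : Finset ι} (hs : s.Nonempty) {f g : ι → ℝ} {B : ℝ}
    (h : ∀ i ∈ s, |f i - g i| ≤ B) : |s.sup' hs f - s.sup' hs g| ≤ B := by
  have hsup : ∀ f g : ι → ℝ, (∀ i ∈ s, f i - g i ≤ B) → s.sup' hs f ≤ s.sup' hs g + B :=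
    fun f g h => by
      rw [Finset.sup'_add]
      exact Finset.sup'_mono_fun fun i hi => by linarith [h i hi]
  rw [abs_sub_le_iff]
  constructor
  · linarith [hsup f g fun i hi => (abs_le.mp (h i hi)).2]
  · linarith [hsup g f fun i hi => by linarith [(abs_le.mp (h i hi)).1]]

section Bellman

variable {V W : Type*} [NormedAddCommGroup V] [NormedAddCommGroup W]
  {S : Finset V} (hS : S.Nonempty) {A : Finset W} {hA : A.Nonempty} {γ : ℝ}

lemma abs_bellman_sub_bellman_le_s16 (hγ : 0 ≤ γ) {r₁ r₂ : V → W → ℝ} {P₁ P₂ : V → W → V → ℝ}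
    {Q₁ Q₂ : V → ℝ} {s₁ s₂ : V} {R E M : ℝ}
    (hP₁ : ∀ a ∈ A, (∀ s ∈ S, 0 ≤ P₁ s₁ a s) ∧ ∑ s ∈ S, P₁ s₁ a s = 1)
    (hP₂ : ∀ a ∈ A, ∑ s ∈ S, P₂ s₂ a s = 1)
    (hr : ∀ a ∈ A, |r₁ s₁ a - r₂ s₂ a| ≤ R)
    (hPE : ∀ a ∈ A, ∑ s ∈ S, |P₁ s₁ a s - P₂ s₂ a s| ≤ E)
    (hQ : ∀ s ∈ S, |Q₁ s - Q₂ s| ≤ M) :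
    |bellman S A hA γ r₁ P₁ Q₁ s₁ - bellman S A hA γ r₂ P₂ Q₂ s₂|
      ≤ R + γ * (M + spanSeminorm S hS Q₂ / 2 * E) := by
  refine abs_sup'_sub_sup'_le hA fun a ha => ?_
  have hsplit : (r₁ s₁ a + γ * ∑ s ∈ S, Q₁ s * P₁ s₁ a s)
        - (r₂ s₂ a + γ * ∑ s ∈ S, Q₂ s * P₂ s₂ a s)
      = (r₁ s₁ a - r₂ s₂ a) + γ * (∑ s ∈ S, (Q₁ s - Q₂ s) * P₁ s₁ a s
          + ∑ s ∈ S, Q₂ s * (P₁ s₁ a s - P₂ s₂ a s)) := by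
    simp only [sub_mul, mul_sub, Finset.sum_sub_distrib]
    ring
  have hvalue : |∑ s ∈ S, (Q₁ s - Q₂ s) * P₁ s₁ a s| ≤ M :=
    abs_sum_mul_le_of_sum_eq_one (hP₁ a ha).1 (hP₁ a ha).2 hQ
  have hkernel : |∑ s ∈ S, Q₂ s * (P₁ s₁ a s - P₂ s₂ a s)| ≤ spanSeminorm S hS Q₂ / 2 * E :=
    (abs_sum_mul_sub_le_spanSeminorm_mul _ _ _ (by rw [(hP₁ a ha).2, hP₂ a ha])).trans
      (mul_le_mul_of_nonneg_left (hPE a ha) (by linarith [spanSeminorm_nonneg (hs := hS) Q₂]))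
  rw [hsplit]
  refine (abs_add_le _ _).trans (add_le_add (hr a ha) ?_)
  rw [abs_mul, abs_of_nonneg hγ]
  exact mul_le_mul_of_nonneg_left ((abs_add_le _ _).trans (add_le_add hvalue hkernel)) hγ

lemma spanSeminorm_le_of_isFixedPt_bellman (hγ : 0 ≤ γ) {d_r d_P : ℝ} (hγd : γ * d_P / 2 < 1)
    {r : V → W → ℝ} {P : V → W → V → ℝ} {Q : V → ℝ}
    (hP : ∀ s ∈ S, ∀ a ∈ A, (∀ s' ∈ S, 0 ≤ P s a s') ∧ ∑ s' ∈ S, P s a s' = 1)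
    (hr : ∀ a ∈ A, ∀ s₁ ∈ S, ∀ s₂ ∈ S, |r s₁ a - r s₂ a| ≤ d_r)
    (hPd : ∀ a ∈ A, ∀ s₁ ∈ S, ∀ s₂ ∈ S, ∑ s ∈ S, |P s₁ a s - P s₂ a s| ≤ d_P)
    (hQ : ∀ s ∈ S, Q s = bellman S A hA γ r P Q s) :
    spanSeminorm S hS Q ≤ d_r / (1 - γ * d_P / 2) := by
  have hself : spanSeminorm S hS Q ≤ d_r + γ * (0 + spanSeminorm S hS Q / 2 * d_P) := by
    refine spanSeminorm_le fun s₁ hs₁ s₂ hs₂ => ?_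
    rw [hQ s₁ hs₁, hQ s₂ hs₂]
    refine (le_abs_self _).trans (abs_bellman_sub_bellman_le_s16 hS hγ
      (fun a ha => hP s₁ hs₁ a ha) (fun a ha => (hP s₂ hs₂ a ha).2)
      (fun a ha => hr a ha s₁ hs₁ s₂ hs₂) (fun a ha => hPd a ha s₁ hs₁ s₂ hs₂)
      (fun s _ => by rw [sub_self, abs_zero]))
  rw [le_div_iff₀ (by linarith)]
  linarith

lemma sup'_abs_sub_le_of_isFixedPt_bellman (hγ0 : 0 ≤ γ) (hγ1 : γ < 1)
    {r₁ r₂ : V → W → ℝ} {P₁ P₂ : V → W → V → ℝ} {Q₁ Q₂ : V → ℝ} {R E K : ℝ}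
    (hP₁ : ∀ s ∈ S, ∀ a ∈ A, (∀ s' ∈ S, 0 ≤ P₁ s a s') ∧ ∑ s' ∈ S, P₁ s a s' = 1)
    (hP₂ : ∀ s ∈ S, ∀ a ∈ A, ∑ s' ∈ S, P₂ s a s' = 1)
    (hr : ∀ s ∈ S, ∀ a ∈ A, |r₁ s a - r₂ s a| ≤ R)
    (hPE : ∀ s ∈ S, ∀ a ∈ A, ∑ s' ∈ S, |P₁ s a s' - P₂ s a s'| ≤ E)
    (hK : spanSeminorm S hS Q₂ ≤ K)
    (hQ₁ : ∀ s ∈ S, Q₁ s = bellman S A hA γ r₁ P₁ Q₁ s)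
    (hQ₂ : ∀ s ∈ S, Q₂ s = bellman S A hA γ r₂ P₂ Q₂ s) :
    S.sup' hS (fun s => |Q₁ s - Q₂ s|) ≤ (R + γ * (K / 2 * E)) / (1 - γ) := by
  set M := S.sup' hS (fun s => |Q₁ s - Q₂ s|)
  have hE : 0 ≤ E := by
    obtain ⟨s, hs⟩ := hS
    obtain ⟨a, ha⟩ := hA
    exact (Finset.sum_nonneg fun _ _ => abs_nonneg _).trans (hPE s hs a ha)
  have hself : M ≤ R + γ * (M + spanSeminorm S hS Q₂ / 2 * E) := by
    refine Finset.sup'_le hS _ fun s hs => ?_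
    rw [hQ₁ s hs, hQ₂ s hs]
    exact abs_bellman_sub_bellman_le_s16 hS hγ0 (hP₁ s hs) (hP₂ s hs) (hr s hs) (hPE s hs)
      fun s' hs' => Finset.le_sup' (fun s => |Q₁ s - Q₂ s|) hs'
  have hspan : γ * (spanSeminorm S hS Q₂ / 2 * E) ≤ γ * (K / 2 * E) := by gcongr
  rw [le_div_iff₀ (by linarith)]
  linarith

end Bellman

theorem qstar_lipschitz_in_policy_general
    {V W U : Type*} [NormedAddCommGroup V] [NormedAddCommGroup W]
    (S : Finset V) (A : Finset W) (Adag : Finset U)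
    (hS : S.Nonempty) (hA : A.Nonempty)
    (hSdiam : ∀ s₁ ∈ S, ∀ s₂ ∈ S, ‖s₁ - s₂‖ ≤ 1)
    (γ : ℝ) (hγ0 : 0 ≤ γ) (hγ1 : γ < 1)
    (d_r d_P : ℝ) (hdr : 0 ≤ d_r) (hdP : 0 ≤ d_P) (hγdP : γ * d_P / 2 < 1)
    (rbar : V → W → (U → ℝ) → ℝ) (Pbar : V → W → (U → ℝ) → V → ℝ)
    (hr : ∀ a ∈ A, ∀ s₁ ∈ S, ∀ s₂ ∈ S, ∀ π₁ ∈ simplexOn Adag, ∀ π₂ ∈ simplexOn Adag,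
      |rbar s₁ a π₁ - rbar s₂ a π₂|
        ≤ d_r * (‖s₁ - s₂‖ + ∑ b ∈ Adag, |π₁ b - π₂ b|))
    (hPmem : ∀ s ∈ S, ∀ a ∈ A, ∀ π ∈ simplexOn Adag,
      (∀ s' ∈ S, 0 ≤ Pbar s a π s') ∧ ∑ s' ∈ S, Pbar s a π s' = 1)
    (hPlip : ∀ a ∈ A, ∀ s₁ ∈ S, ∀ s₂ ∈ S, ∀ π₁ ∈ simplexOn Adag, ∀ π₂ ∈ simplexOn Adag,
      ∑ s' ∈ S, |Pbar s₁ a π₁ s' - Pbar s₂ a π₂ s'|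
        ≤ d_P * (‖s₁ - s₂‖ + ∑ b ∈ Adag, |π₁ b - π₂ b|))
    (Qstar : (U → ℝ) → V → ℝ)
    (hQ : ∀ π ∈ simplexOn Adag, ∀ s,
      Qstar π s
        = bellman S A hA γ (fun s a => rbar s a π) (fun s a => Pbar s a π)
            (Qstar π) s) :
    ∀ π₁ ∈ simplexOn Adag, ∀ π₂ ∈ simplexOn Adag,
      S.sup' hS (fun s => |Qstar π₁ s - Qstar π₂ s|)
        ≤ ((d_r + γ * d_P * (d_r / (1 - γ * d_P / 2)) / 2) / (1 - γ))
            * ∑ b ∈ Adag, |π₁ b - π₂ b| := by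
  intro π₁ hπ₁ π₂ hπ₂
  have hdiam : ∀ {d : ℝ}, 0 ≤ d → ∀ s₁ ∈ S, ∀ s₂ ∈ S,
      d * (‖s₁ - s₂‖ + ∑ b ∈ Adag, |π₂ b - π₂ b|) ≤ d := fun hd s₁ hs₁ s₂ hs₂ => by
    simpa using mul_le_of_le_one_right hd (hSdiam s₁ hs₁ s₂ hs₂)
  have hspan := spanSeminorm_le_of_isFixedPt_bellman hS hγ0 hγdP
    (fun s hs a ha => hPmem s hs a ha π₂ hπ₂)
    (fun a ha s₁ hs₁ s₂ hs₂ =>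
      (hr a ha s₁ hs₁ s₂ hs₂ π₂ hπ₂ π₂ hπ₂).trans (hdiam hdr s₁ hs₁ s₂ hs₂))
    (fun a ha s₁ hs₁ s₂ hs₂ =>
      (hPlip a ha s₁ hs₁ s₂ hs₂ π₂ hπ₂ π₂ hπ₂).trans (hdiam hdP s₁ hs₁ s₂ hs₂))
    fun s _ => hQ π₂ hπ₂ s
  have hsame : ∀ {d : ℝ} (s : V), d * (‖s - s‖ + ∑ b ∈ Adag, |π₁ b - π₂ b|)
      = d * ∑ b ∈ Adag, |π₁ b - π₂ b| := fun s => by rw [sub_self, norm_zero, zero_add]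
  refine (sup'_abs_sub_le_of_isFixedPt_bellman hS hγ0 hγ1
    (fun s hs a ha => hPmem s hs a ha π₁ hπ₁) (fun s hs a ha => (hPmem s hs a ha π₂ hπ₂).2)
    (fun s hs a ha => hsame s ▸ hr a ha s hs s hs π₁ hπ₁ π₂ hπ₂)
    (fun s hs a ha => hsame s ▸ hPlip a ha s hs s hs π₁ hπ₁ π₂ hπ₂)
    hspan (fun s _ => hQ π₁ hπ₁ s) fun s _ => hQ π₂ hπ₂ s).trans_eq ?_
  ring

/-- Lipschitz dependence of the optimal Q-function on the opponent's policy: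
with `d_Q = d_r / (1 − γ d_P / 2)` and `d₀ = (d_r + γ d_P d_Q / 2)/(1 − γ)`,
`‖Q*_{π₁} − Q*_{π₂}‖_∞ ≤ d₀ ‖π₁ − π₂‖₁` for all `π₁, π₂ ∈ Δ(A†)`. -/
theorem qstar_lipschitz_in_policy
    {V W U : Type*} [NormedAddCommGroup V] [NormedAddCommGroup W] [NormedAddCommGroup U]
    (S : Finset V) (A : Finset W) (Adag : Finset U)
    (hS : S.Nonempty) (hA : A.Nonempty) (hAdag : Adag.Nonempty)
    (hSdiam : ∀ s₁ ∈ S, ∀ s₂ ∈ S, ‖s₁ - s₂‖ ≤ 1)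
    (hAdiam : ∀ a₁ ∈ A, ∀ a₂ ∈ A, ‖a₁ - a₂‖ ≤ 1)
    (hAdagdiam : ∀ b₁ ∈ Adag, ∀ b₂ ∈ Adag, ‖b₁ - b₂‖ ≤ 1)
    (γ : ℝ) (hγ0 : 0 ≤ γ) (hγ1 : γ < 1)
    (d_r d_P : ℝ) (hdr : 0 ≤ d_r) (hdP : 0 ≤ d_P) (hγdP : γ * d_P / 2 < 1)
    (rbar : V → W → (U → ℝ) → ℝ) (Pbar : V → W → (U → ℝ) → V → ℝ)
    (hr : ∀ a ∈ A, ∀ s₁ ∈ S, ∀ s₂ ∈ S, ∀ π₁ ∈ simplexOn Adag, ∀ π₂ ∈ simplexOn Adag,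
      |rbar s₁ a π₁ - rbar s₂ a π₂|
        ≤ d_r * (‖s₁ - s₂‖ + ∑ b ∈ Adag, |π₁ b - π₂ b|))
    (hPmem : ∀ s ∈ S, ∀ a ∈ A, ∀ π ∈ simplexOn Adag,
      (∀ s' ∈ S, 0 ≤ Pbar s a π s') ∧ ∑ s' ∈ S, Pbar s a π s' = 1)
    (hPlip : ∀ a ∈ A, ∀ s₁ ∈ S, ∀ s₂ ∈ S, ∀ π₁ ∈ simplexOn Adag, ∀ π₂ ∈ simplexOn Adag,
      ∑ s' ∈ S, |Pbar s₁ a π₁ s' - Pbar s₂ a π₂ s'|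
        ≤ d_P * (‖s₁ - s₂‖ + ∑ b ∈ Adag, |π₁ b - π₂ b|))
    (Qstar : (U → ℝ) → V → ℝ)
    (hQ : ∀ π ∈ simplexOn Adag, ∀ s,
      Qstar π s
        = bellman S A hA γ (fun s a => rbar s a π) (fun s a => Pbar s a π)
            (Qstar π) s) :
    ∀ π₁ ∈ simplexOn Adag, ∀ π₂ ∈ simplexOn Adag,
      S.sup' hS (fun s => |Qstar π₁ s - Qstar π₂ s|)
        ≤ ((d_r + γ * d_P * (d_r / (1 - γ * d_P / 2)) / 2) / (1 - γ))
            * ∑ b ∈ Adag, |π₁ b - π₂ b| :=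
  qstar_lipschitz_in_policy_general S A Adag hS hA hSdiam γ hγ0 hγ1 d_r d_P hdr hdP hγdP rbar Pbar
    hr hPmem hPlip Qstar hQ
end
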